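/- arXiv:2403.10070 — 4 statements merged into one kernel-verified Lean document; each statement's English description precedes it below -/
import Mathlib

section
/- Let s ∈ ℕ and let K : ℝ^d × ℝ^d → ℝ be a Mercer kernel with K ∈ C_b^{2s+1}(ℝ^d × ℝ^d). Then (i) for every x ∈ ℝ^d and every multi-index α ∈ ℕ^d with |α| ≤ s, the function (D^α K)_x : y ↦ D^α_x K(x,y) (the partial derivative of K of order α with respect to its first argument) belongs to the RKHS H_K; and (ii) the partial-derivative reproducing property holds: D^α f(x) = ⟨(D^α K)_x, f⟩_{H_K} for all x ∈ ℝ^d and all f ∈ H_K. -/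
noncomputable section
open MeasureTheory RealInnerProductSpace Filter

/-- `ℝ^n` with the Euclidean structure. -/
abbrev Euc (n : ℕ) : Type := EuclideanSpace ℝ (Fin n)

/-- Directional derivative of a real-valued function in the direction `v`. -/
def dirDeriv {F : Type*} [NormedAddCommGroup F] [NormedSpace ℝ F] (v : F) (f : F → ℝ) :
    F → ℝ := fun x => fderiv ℝ f x v

/-- Iterated partial derivative `D^α f`, where the multi-index `α` is encoded as the list of
the directions of the partial derivatives that are taken. -/
def mderiv {F : Type*} [NormedAddCommGroup F] [NormedSpace ℝ F] (vs : List F) (f : F → ℝ) :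
    F → ℝ := vs.foldr dirDeriv f

/-- The `i`-th coordinate vector of `ℝ^n`. -/
def ee (n : ℕ) (i : Fin n) : Euc n := EuclideanSpace.single i 1

/-- The coordinate directions of `ℝ^n × ℝ^n`; lists of such directions encode the
multi-indices `(α, β)` of mixed partial derivatives `D^{(α,β)} K`. -/
def prodDirs (n : ℕ) : Set (Euc n × Euc n) :=
  (Set.range fun i : Fin n => ((ee n i, 0) : Euc n × Euc n)) ∪
    (Set.range fun i : Fin n => (((0 : Euc n), ee n i) : Euc n × Euc n))

/-- `K` is a Mercer kernel: symmetric and positive semidefinite. -/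
def IsMercer {n : ℕ} (K : Euc n → Euc n → ℝ) : Prop :=
  (∀ x y, K x y = K y x) ∧
    ∀ (m : ℕ) (x : Fin m → Euc n) (c : Fin m → ℝ),
      0 ≤ ∑ i, ∑ j, c i * c j * K (x i) (x j)

/-- `K ∈ C_b^s(ℝ^n × ℝ^n)` : `K` is `s`-times continuously differentiable, and every partial
derivative of order at most `s` is bounded. -/
def KernelCb (n s : ℕ) (K : Euc n → Euc n → ℝ) : Prop :=
  ContDiff ℝ s (fun p : Euc n × Euc n => K p.1 p.2) ∧
    ∀ l : List (Euc n × Euc n), (∀ v ∈ l, v ∈ prodDirs n) → l.length ≤ s →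
      ∃ C, ∀ p : Euc n × Euc n, |mderiv l (fun q : Euc n × Euc n => K q.1 q.2) p| ≤ C

/-- `κ² ≥ ‖K‖_{C_b^s}` : every partial derivative of `K` of order at most `s` is bounded in
absolute value by `κ²` (with `κ ≥ 0`). -/
def KernelDerivBound (n s : ℕ) (K : Euc n → Euc n → ℝ) (κ : ℝ) : Prop :=
  0 ≤ κ ∧ ∀ l : List (Euc n × Euc n), (∀ v ∈ l, v ∈ prodDirs n) → l.length ≤ s →
    ∀ p : Euc n × Euc n, |mderiv l (fun q : Euc n × Euc n => K q.1 q.2) p| ≤ κ ^ 2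

/-- `(H, emb, sec)` realizes the RKHS `H_K` of the kernel `K` : `H` is a Hilbert space of
functions (the linear inclusion `emb` into functions on `ℝ^n` is injective), the kernel
sections `sec x = K (x, ·)` belong to `H`, and the reproducing property holds. -/
def IsRKHS {n : ℕ} {H : Type*} [NormedAddCommGroup H] [InnerProductSpace ℝ H]
    (K : Euc n → Euc n → ℝ) (emb : H →ₗ[ℝ] (Euc n → ℝ)) (sec : Euc n → H) : Prop :=
  Function.Injective emb ∧ (∀ x, emb (sec x) = K x) ∧
    ∀ (f : H) (x : Euc n), emb f x = ⟪f, sec x⟫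

namespace DRP
open scoped Topology
set_option synthInstance.maxHeartbeats 1000000
set_option maxHeartbeats 1000000
variable {F : Type*} [NormedAddCommGroup F] [NormedSpace ℝ F]

lemma mderiv_nil (f : F → ℝ) : mderiv [] f = f := rfl

lemma mderiv_cons (v : F) (l : List F) (f : F → ℝ) :
    mderiv (v :: l) f = dirDeriv v (mderiv l f) := rfl

lemma contDiff_mderiv {f : F → ℝ} :
    ∀ (l : List F) {n m : ℕ}, ContDiff ℝ n f → l.length + m ≤ n →
      ContDiff ℝ m (mderiv l f) := by
  intro l
  induction l with
  | nil =>
    intro n m hf h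
    exact hf.of_le (by exact_mod_cast (by simpa using h))
  | cons v l ih =>
    intro n m hf h
    have h' : l.length + (m + 1) ≤ n := by simp [List.length_cons] at h; omega
    have hml : ContDiff ℝ (m + 1 : ℕ) (mderiv l f) := ih hf h'
    rw [mderiv_cons]
    exact (hml.fderiv_right (by exact_mod_cast le_rfl)).clm_apply contDiff_const

lemma differentiable_mderiv {f : F → ℝ} {l : List F} {n : ℕ} (hf : ContDiff ℝ n f)
    (h : l.length + 1 ≤ n) : Differentiable ℝ (mderiv l f) :=
  (contDiff_mderiv l hf h).differentiable (by norm_num)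

lemma hasDerivAt_line (f : F → ℝ) (c w : F) (a : ℝ) (hf : DifferentiableAt ℝ f (c + a • w)) :
    HasDerivAt (fun t : ℝ => f (c + t • w)) (fderiv ℝ f (c + a • w) w) a := by
  have h1 : HasDerivAt (fun t : ℝ => c + t • w) w a := by
    simpa using ((hasDerivAt_id a).smul_const w).const_add c
  have h2 := hf.hasFDerivAt.comp_hasDerivAt a h1
  exact h2

lemma tendsto_quot {f : F → ℝ} (p v : F) (hf : DifferentiableAt ℝ f p) :
    Tendsto (fun t : ℝ => t⁻¹ * (f (p + t • v) - f p)) (𝓝[≠] (0:ℝ))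
      (𝓝 (fderiv ℝ f p v)) := by
  have h0 : p + (0:ℝ) • v = p := by simp
  have h := hasDerivAt_line f p v 0 (by rwa [h0])
  rw [h0] at h
  have := h.tendsto_slope_zero
  simpa [smul_eq_mul] using this

lemma mderiv_congr {f g : F → ℝ} (h : f = g) (l : List F) : mderiv l f = mderiv l g := by rw [h]

lemma mderiv_add {n : ℕ} : ∀ (l : List F) {f g : F → ℝ}, ContDiff ℝ n f → ContDiff ℝ n g →
    l.length ≤ n → mderiv l (fun x => f x + g x) = fun x => mderiv l f x + mderiv l g x := by
  intro l
  induction l with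
  | nil => intro f g _ _ _; rfl
  | cons v l ih =>
    intro f g hf hg h
    have h' : l.length + 1 ≤ n := by simpa [List.length_cons] using h
    rw [mderiv_cons, ih hf hg (by omega)]
    funext x
    rw [mderiv_cons, mderiv_cons]
    show fderiv ℝ (fun x => mderiv l f x + mderiv l g x) x v = _
    rw [fderiv_fun_add ((differentiable_mderiv hf h') x) ((differentiable_mderiv hg h') x)]
    rfl

lemma mderiv_smul {n : ℕ} (c : ℝ) : ∀ (l : List F) {f : F → ℝ}, ContDiff ℝ n f →
    l.length ≤ n → mderiv l (fun x => c • f x) = fun x => c • mderiv l f x := by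
  intro l
  induction l with
  | nil => intro f _ _; rfl
  | cons v l ih =>
    intro f hf h
    have h' : l.length + 1 ≤ n := by simpa [List.length_cons] using h
    rw [mderiv_cons, ih hf (by omega)]
    funext x
    rw [mderiv_cons]
    show fderiv ℝ (fun x => c • mderiv l f x) x v = _
    rw [fderiv_fun_const_smul ((differentiable_mderiv hf h') x) c]
    simp [dirDeriv]

lemma mderiv_zero : ∀ l : List F, mderiv l (fun _ => (0:ℝ)) = fun _ => (0:ℝ) := by
  intro l
  induction l with
  | nil => rfl
  | cons v l ih =>
    rw [mderiv_cons, ih]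
    funext x
    show fderiv ℝ (fun _ => (0:ℝ)) x v = 0
    rw [fderiv_fun_const]
    simp

lemma dirDeriv_comm {g : F → ℝ} (hg : ContDiff ℝ 2 g) (u w : F) (x : F) :
    dirDeriv u (dirDeriv w g) x = dirDeriv w (dirDeriv u g) x := by
  have hsym : IsSymmSndFDerivAt ℝ g x := hg.contDiffAt.isSymmSndFDerivAt (by simp)
  have hdf : DifferentiableAt ℝ (fderiv ℝ g) x :=
    ((hg.fderiv_right (m := 1) (by norm_num)).differentiable (by norm_num)).differentiableAt
  have key : ∀ a : F, dirDeriv a (dirDeriv w g) x = fderiv ℝ (fderiv ℝ g) x a w := by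
    intro a
    show fderiv ℝ (fun y => fderiv ℝ g y w) x a = _
    rw [fderiv_clm_apply hdf (differentiableAt_const w)]
    simp
  have key2 : ∀ a : F, dirDeriv a (dirDeriv u g) x = fderiv ℝ (fderiv ℝ g) x a u := by
    intro a
    show fderiv ℝ (fun y => fderiv ℝ g y u) x a = _
    rw [fderiv_clm_apply hdf (differentiableAt_const u)]
    simp
  rw [key u, key2 w, hsym u w]

lemma mderiv_comm {f : F → ℝ} {n : ℕ} (hf : ContDiff ℝ n f) (u w : F) (l : List F)
    (h : l.length + 2 ≤ n) : mderiv (u :: w :: l) f = mderiv (w :: u :: l) f := by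
  have hg : ContDiff ℝ 2 (mderiv l f) := contDiff_mderiv l hf h
  funext x
  exact dirDeriv_comm hg u w x

lemma mderiv_insert {f : F → ℝ} {n : ℕ} (hf : ContDiff ℝ n f) (v : F) :
    ∀ (l₁ l₂ : List F), l₁.length + l₂.length + 2 ≤ n →
      mderiv (l₁ ++ v :: l₂) f = mderiv (v :: (l₁ ++ l₂)) f := by
  intro l₁
  induction l₁ with
  | nil => intro l₂ _; rfl
  | cons u l₁ ih =>
    intro l₂ h
    have h' : l₁.length + l₂.length + 2 ≤ n := by simp [List.length_cons] at h; omega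
    show mderiv (u :: (l₁ ++ v :: l₂)) f = _
    rw [mderiv_cons, ih l₂ h']
    have : mderiv (u :: v :: (l₁ ++ l₂)) f = mderiv (v :: u :: (l₁ ++ l₂)) f :=
      mderiv_comm hf u v (l₁ ++ l₂) (by simp [List.length_cons, List.length_append] at h ⊢; omega)
    rw [← mderiv_cons, this]
    rfl

lemma mderiv_slice {E G : Type*} [NormedAddCommGroup E] [NormedSpace ℝ E]
    [NormedAddCommGroup G] [NormedSpace ℝ G] {f : E × G → ℝ} {n : ℕ} (hf : ContDiff ℝ n f) :
    ∀ (l : List E), l.length + 1 ≤ n → ∀ (y : G) (x : E),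
      mderiv l (fun x' => f (x', y)) x = mderiv (l.map (fun v => ((v, 0) : E × G))) f (x, y) := by
  intro l
  induction l with
  | nil => intro _ y x; rfl
  | cons v l ih =>
    intro h y x
    have h' : l.length + 1 ≤ n := by simp [List.length_cons] at h; omega
    have hbig : DifferentiableAt ℝ (mderiv (l.map (fun v => ((v, 0) : E × G))) f) (x, y) :=
      (differentiable_mderiv hf (by simpa using h')) (x, y)
    have hsl : HasFDerivAt (fun x' : E => mderiv (l.map (fun v => ((v, 0) : E × G))) f (x', y))
        ((fderiv ℝ (mderiv (l.map (fun v => ((v, 0) : E × G))) f) (x, y)).comp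
          (ContinuousLinearMap.inl ℝ E G)) x :=
      hbig.hasFDerivAt.comp x (hasFDerivAt_prodMk_left x y)
    rw [mderiv_cons]
    show dirDeriv v (mderiv l fun x' => f (x', y)) x = _
    have heq : (mderiv l fun x' => f (x', y))
        = fun x' => mderiv (l.map (fun v => ((v, 0) : E × G))) f (x', y) := by
      funext x'; exact ih h' y x'
    rw [heq]
    show fderiv ℝ _ x v = _
    rw [hsl.fderiv]
    simp only [ContinuousLinearMap.comp_apply, ContinuousLinearMap.inl_apply]
    rfl

lemma abs_le_of_mem_segment {a t : ℝ} (ha : a ∈ segment ℝ 0 t) : |a| ≤ |t| := by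
  rw [segment_eq_uIcc] at ha
  rcases le_total (0:ℝ) t with h | h
  · rw [Set.uIcc_of_le h, Set.mem_Icc] at ha
    exact abs_le.mpr ⟨by linarith [abs_nonneg t, ha.1], by linarith [le_abs_self t, ha.2]⟩
  · rw [Set.uIcc_of_ge h, Set.mem_Icc] at ha
    exact abs_le.mpr ⟨by linarith [neg_abs_le t, ha.1], by linarith [abs_nonneg t, ha.2]⟩

lemma key_cauchy {E H : Type*} [NormedAddCommGroup E] [NormedSpace ℝ E]
    [NormedAddCommGroup H] [InnerProductSpace ℝ H] [CompleteSpace H]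
    {G : E × E → ℝ} (hG : ContDiff ℝ 2 G)
    {φ : E → H} (hφ : ∀ u w : E, ⟪φ u, φ w⟫ = G (u, w)) (x v : E) :
    ∃ L : H, Tendsto (fun t : ℝ => t⁻¹ • (φ (x + t • v) - φ x)) (𝓝[≠] (0:ℝ)) (𝓝 L) := by
  set q : ℝ → H := fun t => t⁻¹ • (φ (x + t • v) - φ x) with hqdef
  set pt : ℝ → ℝ → E × E := fun a b => (x + a • v, x + b • v) with hptdef
  have hG1 : Differentiable ℝ G := hG.differentiable (by norm_num)
  set g₂ : E × E → ℝ := fun w => fderiv ℝ G w ((0 : E), v) with hg2def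
  have hg₂ : ContDiff ℝ 1 g₂ := (hG.fderiv_right (m := 1) (by norm_num)).clm_apply contDiff_const
  set h : E × E → ℝ := fun w => fderiv ℝ g₂ w (v, (0 : E)) with hhdef
  have hcont : Continuous h :=
    ((hg₂.fderiv_right (m := 0) (by norm_num)).clm_apply contDiff_const).continuous
  set M : ℝ := h (x, x) with hMdef
  -- inner products of difference quotients
  have hq : ∀ t r : ℝ, ⟪q t, q r⟫ =
      (t⁻¹ * r⁻¹) * (G (pt t r) - G (pt t 0) - G (pt 0 r) + G (pt 0 0)) := by
    intro t r
    have e1 : pt t 0 = (x + t • v, x) := by simp [hptdef]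
    have e2 : pt 0 r = (x, x + r • v) := by simp [hptdef]
    have e3 : pt 0 0 = (x, x) := by simp [hptdef]
    simp only [hqdef, real_inner_smul_left, real_inner_smul_right, inner_sub_left,
      inner_sub_right, hφ, hptdef, e1, e2, e3]
    simp [hptdef]
    ring
  -- point equalities for line parametrizations
  have hpteq1 : ∀ a b : ℝ, (x, x + b • v) + a • (v, (0:E)) = pt a b := by
    intro a b
    simp [hptdef, Prod.ext_iff]
  have hpteq2 : ∀ a b : ℝ, (x + a • v, x) + b • ((0:E), v) = pt a b := by
    intro a b
    simp [hptdef, Prod.ext_iff]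
  have hlineg₂ : ∀ a b : ℝ, HasDerivAt (fun a : ℝ => g₂ (pt a b)) (h (pt a b)) a := by
    intro a b
    have h1 := hasDerivAt_line g₂ (x, x + b • v) (v, (0:E)) a
      (((hg₂.differentiable (by norm_num))) _)
    simp only [hpteq1] at h1
    exact h1
  have hlineG : ∀ a b : ℝ, HasDerivAt (fun b : ℝ => G (pt a b)) (g₂ (pt a b)) b := by
    intro a b
    have h1 := hasDerivAt_line G (x + a • v, x) ((0:E), v) b (hG1 _)
    simp only [hpteq2] at h1
    exact h1
  -- main estimate
  have claim : ∀ ε > (0:ℝ), ∃ δ > (0:ℝ), ∀ t r : ℝ, t ≠ 0 → r ≠ 0 → |t| < δ → |r| < δ →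
      |⟪q t, q r⟫ - M| ≤ ε := by
    intro ε hε
    obtain ⟨δ', hδ', hδ'2⟩ := Metric.continuousAt_iff.mp hcont.continuousAt ε hε
    refine ⟨δ' / (‖v‖ + 1), by positivity, ?_⟩
    set δ := δ' / (‖v‖ + 1) with hδdef
    have hδpos : 0 < δ := by positivity
    intro t r ht0 hr0 htδ hrδ
    have hptclose : ∀ a b : ℝ, |a| < δ → |b| < δ → |h (pt a b) - M| ≤ ε := by
      intro a b ha hb
      have hdista : ∀ c : ℝ, |c| < δ → dist (x + c • v) x < δ' := by
        intro c hc
        rw [dist_eq_norm]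
        have : ‖x + c • v - x‖ = |c| * ‖v‖ := by
          simp [norm_smul]
        rw [this]
        have h1 : |c| * ‖v‖ ≤ |c| * (‖v‖ + 1) := by
          apply mul_le_mul_of_nonneg_left (by linarith) (abs_nonneg c)
        have h2 : |c| * (‖v‖ + 1) < δ * (‖v‖ + 1) := by
          apply mul_lt_mul_of_pos_right hc (by positivity)
        have h3 : δ * (‖v‖ + 1) = δ' := by
          rw [hδdef, div_mul_cancel₀ _ (by positivity)]
        linarith
      have : dist (pt a b) (x, x) < δ' := by
        rw [Prod.dist_eq]
        exact max_lt (hdista a ha) (hdista b hb)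
      have := hδ'2 this
      rw [Real.dist_eq] at this
      exact le_of_lt this
    -- step 1 : inner mean value estimate
    have step1 : ∀ b : ℝ, |b| < δ → |g₂ (pt t b) - g₂ (pt 0 b) - t * M| ≤ ε * |t| := by
      intro b hb
      set seg := segment ℝ (0:ℝ) t with hsegdef
      have hder : ∀ a ∈ seg, HasDerivWithinAt (fun a : ℝ => g₂ (pt a b) - a * M)
          (h (pt a b) - M) seg a := by
        intro a _
        have : HasDerivAt (fun a : ℝ => g₂ (pt a b) - a * M) (h (pt a b) - 1 * M) a :=
          (hlineg₂ a b).sub ((hasDerivAt_id a).mul_const M)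
        simpa using this.hasDerivWithinAt
      have hbound : ∀ a ∈ seg, ‖h (pt a b) - M‖ ≤ ε := by
        intro a ha
        rw [Real.norm_eq_abs]
        exact hptclose a b (lt_of_le_of_lt (abs_le_of_mem_segment ha) htδ) hb
      have := (convex_segment (0:ℝ) t).norm_image_sub_le_of_norm_hasDerivWithin_le hder hbound
        (left_mem_segment ℝ (0:ℝ) t) (right_mem_segment ℝ (0:ℝ) t)
      rw [Real.norm_eq_abs, Real.norm_eq_abs] at this
      have heq : g₂ (pt t b) - t * M - (g₂ (pt 0 b) - 0 * M)
          = g₂ (pt t b) - g₂ (pt 0 b) - t * M := by ring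
      rw [heq, sub_zero] at this
      exact this
    -- step 2 : outer mean value estimate
    have step2 : |(G (pt t r) - G (pt t 0) - G (pt 0 r) + G (pt 0 0)) - t * r * M|
        ≤ ε * |t| * |r| := by
      set seg := segment ℝ (0:ℝ) r with hsegdef
      have hder : ∀ b ∈ seg, HasDerivWithinAt
          (fun b : ℝ => G (pt t b) - G (pt 0 b) - t * (b * M))
          (g₂ (pt t b) - g₂ (pt 0 b) - t * M) seg b := by
        intro b _
        have h1 : HasDerivAt (fun b : ℝ => G (pt t b) - G (pt 0 b) - t * (b * M))
            (g₂ (pt t b) - g₂ (pt 0 b) - t * (1 * M)) b :=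
          ((hlineG t b).sub (hlineG 0 b)).sub (((hasDerivAt_id b).mul_const M).const_mul t)
        simpa using h1.hasDerivWithinAt
      have hbound : ∀ b ∈ seg, ‖g₂ (pt t b) - g₂ (pt 0 b) - t * M‖ ≤ ε * |t| := by
        intro b hb
        rw [Real.norm_eq_abs]
        exact step1 b (lt_of_le_of_lt (abs_le_of_mem_segment hb) hrδ)
      have := (convex_segment (0:ℝ) r).norm_image_sub_le_of_norm_hasDerivWithin_le hder hbound
        (left_mem_segment ℝ (0:ℝ) r) (right_mem_segment ℝ (0:ℝ) r)
      rw [Real.norm_eq_abs, Real.norm_eq_abs] at this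
      have heq : G (pt t r) - G (pt 0 r) - t * (r * M)
          - (G (pt t 0) - G (pt 0 0) - t * (0 * M))
          = (G (pt t r) - G (pt t 0) - G (pt 0 r) + G (pt 0 0)) - t * r * M := by ring
      rw [heq, sub_zero] at this
      linarith [this, abs_nonneg ((G (pt t r) - G (pt t 0) - G (pt 0 r) + G (pt 0 0)) - t * r * M)]
    -- conclusion
    have ht : |t| ≠ 0 := by simpa using ht0
    have hr : |r| ≠ 0 := by simpa using hr0
    have hfinal : ⟪q t, q r⟫ - M = (t⁻¹ * r⁻¹) *
        ((G (pt t r) - G (pt t 0) - G (pt 0 r) + G (pt 0 0)) - t * r * M) := by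
      rw [hq t r]
      field_simp
      try ring
    rw [hfinal, abs_mul, abs_mul, abs_inv, abs_inv]
    calc |t|⁻¹ * |r|⁻¹ * |(G (pt t r) - G (pt t 0) - G (pt 0 r) + G (pt 0 0)) - t * r * M|
        ≤ |t|⁻¹ * |r|⁻¹ * (ε * |t| * |r|) := by
          apply mul_le_mul_of_nonneg_left step2 (by positivity)
      _ = ε := by field_simp
  -- Cauchy and completeness
  have hC : Cauchy (Filter.map q (𝓝[≠] (0:ℝ))) := by
    rw [Metric.cauchy_iff]
    refine ⟨Filter.map_neBot, ?_⟩
    intro ε hε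
    obtain ⟨δ, hδ, hclaim⟩ := claim (ε ^ 2 / 16) (by positivity)
    refine ⟨q '' {u : ℝ | u ≠ 0 ∧ |u| < δ}, ?_, ?_⟩
    · apply image_mem_map
      have h1 : Metric.ball (0:ℝ) δ ∈ 𝓝[≠] (0:ℝ) :=
        nhdsWithin_le_nhds (Metric.ball_mem_nhds 0 hδ)
      have h2 : {u : ℝ | u ≠ 0} ∈ 𝓝[≠] (0:ℝ) := self_mem_nhdsWithin
      filter_upwards [h1, h2] with u hu1 hu2
      exact ⟨hu2, by simpa [Real.dist_eq] using hu1⟩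
    · rintro a ⟨t, ⟨ht0, htδ⟩, rfl⟩ b ⟨r, ⟨hr0, hrδ⟩, rfl⟩
      rw [dist_eq_norm]
      have hsq : ‖q t - q r‖ ^ 2 = (⟪q t, q t⟫ - M) - 2 * (⟪q t, q r⟫ - M)
          + (⟪q r, q r⟫ - M) := by
        rw [norm_sub_sq_real, real_inner_self_eq_norm_sq, real_inner_self_eq_norm_sq]
        ring
      have h1 := hclaim t t ht0 ht0 htδ htδ
      have h2 := hclaim t r ht0 hr0 htδ hrδ
      have h3 := hclaim r r hr0 hr0 hrδ hrδ
      have hb : ‖q t - q r‖ ^ 2 ≤ ε ^ 2 / 4 := by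
        rw [hsq]
        have := abs_le.mp h1
        have := abs_le.mp h2
        have := abs_le.mp h3
        linarith [(abs_le.mp h1).1, (abs_le.mp h1).2, (abs_le.mp h2).1, (abs_le.mp h2).2,
          (abs_le.mp h3).1, (abs_le.mp h3).2]
      nlinarith [norm_nonneg (q t - q r), hε]
  obtain ⟨L, hL⟩ := CompleteSpace.complete hC
  exact ⟨L, hL⟩


section Kernel

variable {d s : ℕ} {K : Euc d → Euc d → ℝ}
  {H : Type*} [NormedAddCommGroup H] [InnerProductSpace ℝ H] [CompleteSpace H]

/-- The kernel as a function on the product space. -/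
def Kt (K : Euc d → Euc d → ℝ) : Euc d × Euc d → ℝ := fun p => K p.1 p.2

/-- Multi-index in the first slot. -/
def L1 {d : ℕ} (α : List (Fin d)) : List (Euc d × Euc d) := α.map fun i => (ee d i, 0)

/-- Multi-index in the second slot. -/
def L2 {d : ℕ} (β : List (Fin d)) : List (Euc d × Euc d) := β.map fun i => (0, ee d i)

@[simp] lemma length_L1 {d : ℕ} (α : List (Fin d)) : (L1 α).length = α.length := by
  simp [L1]

@[simp] lemma L2_nil {d : ℕ} : L2 ([] : List (Fin d)) = [] := rfl

@[simp] lemma length_L2 {d : ℕ} (β : List (Fin d)) : (L2 β).length = β.length := by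
  simp [L2]

/-- Iterated directional derivatives of the kernel section map, with values in the RKHS. -/
def Phi (sec : Euc d → H) : List (Fin d) → Euc d → H
  | [] => sec
  | i :: α => fun x =>
      limUnder (𝓝[≠] (0:ℝ)) fun t => t⁻¹ • (Phi sec α (x + t • ee d i) - Phi sec α x)

variable {sec : Euc d → H}

@[simp] lemma Phi_nil : Phi sec [] = sec := rfl

@[simp] lemma Phi_cons (i : Fin d) (α : List (Fin d)) :
    Phi sec (i :: α) = fun x =>
      limUnder (𝓝[≠] (0:ℝ)) fun t => t⁻¹ • (Phi sec α (x + t • ee d i) - Phi sec α x) := rfl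

theorem key_inner (hK : ContDiff ℝ (2 * s + 1 : ℕ) (Kt K))
    (hsec : ∀ x y : Euc d, ⟪sec x, sec y⟫ = K x y) :
    ∀ m : ℕ, m ≤ s → ∀ α β : List (Fin d), α.length ≤ m → β.length ≤ m →
      ∀ x y : Euc d, ⟪Phi sec α x, Phi sec β y⟫ = mderiv (L1 α ++ L2 β) (Kt K) (x, y) := by
  intro m
  induction m with
  | zero =>
    intro _ α β hα hβ x y
    rw [List.length_eq_zero_iff.mp (Nat.le_zero.mp hα), List.length_eq_zero_iff.mp (Nat.le_zero.mp hβ)]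
    exact hsec x y
  | succ m ih =>
    intro hms
    have hm : m ≤ s := by omega
    -- convergence of difference quotients
    have tendstoPhi : ∀ γ : List (Fin d), γ.length ≤ m → ∀ (i : Fin d) (x : Euc d),
        Tendsto (fun t : ℝ => t⁻¹ • (Phi sec γ (x + t • ee d i) - Phi sec γ x))
          (𝓝[≠] (0:ℝ)) (𝓝 (Phi sec (i :: γ) x)) := by
      intro γ hγ i x
      have hG : ContDiff ℝ 2 (mderiv (L1 γ ++ L2 γ) (Kt K)) := by
        apply contDiff_mderiv _ hK
        simp only [List.length_append, length_L1, length_L2]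
        omega
      have hφ : ∀ u w, ⟪Phi sec γ u, Phi sec γ w⟫ = (mderiv (L1 γ ++ L2 γ) (Kt K)) (u, w) :=
        fun u w => ih hm γ γ hγ hγ u w
      obtain ⟨L, hL⟩ := key_cauchy hG hφ x (ee d i)
      exact tendsto_nhds_limUnder ⟨L, hL⟩
    -- extension in the second slot
    have C1 : ∀ α' β' : List (Fin d), α'.length ≤ m → β'.length ≤ m → ∀ (j : Fin d) (x y),
        ⟪Phi sec α' x, Phi sec (j :: β') y⟫
          = mderiv (L1 α' ++ L2 (j :: β')) (Kt K) (x, y) := by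
      intro α' β' hα' hβ' j x y
      set Fb := mderiv (L1 α' ++ L2 β') (Kt K) with hFb
      have hdiff : DifferentiableAt ℝ Fb (x, y) := by
        apply differentiable_mderiv hK _ (x, y)
        simp only [List.length_append, length_L1, length_L2]
        omega
      have h1 : Tendsto
          (fun t : ℝ => ⟪Phi sec α' x, t⁻¹ • (Phi sec β' (y + t • ee d j) - Phi sec β' y)⟫)
          (𝓝[≠] (0:ℝ)) (𝓝 ⟪Phi sec α' x, Phi sec (j :: β') y⟫) :=
        tendsto_const_nhds.inner (tendstoPhi β' hβ' j y)
      have h2eq : (fun t : ℝ =>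
          ⟪Phi sec α' x, t⁻¹ • (Phi sec β' (y + t • ee d j) - Phi sec β' y)⟫)
          = fun t : ℝ => t⁻¹ * (Fb (x, y + t • ee d j) - Fb (x, y)) := by
        funext t
        rw [real_inner_smul_right, inner_sub_right,
          ih hm α' β' hα' hβ' x (y + t • ee d j), ih hm α' β' hα' hβ' x y]
      rw [h2eq] at h1
      have h3 := tendsto_quot (f := Fb) ((x, y)) (((0 : Euc d), ee d j)) hdiff
      have hpt : ∀ t : ℝ, ((x, y) : Euc d × Euc d) + t • (((0 : Euc d), ee d j))
          = (x, y + t • ee d j) := by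
        intro t; simp [Prod.ext_iff]
      simp only [hpt] at h3
      have h5 : ⟪Phi sec α' x, Phi sec (j :: β') y⟫ = fderiv ℝ Fb (x, y) ((0 : Euc d), ee d j) :=
        tendsto_nhds_unique h1 h3
      rw [h5]
      have hcons : fderiv ℝ Fb (x, y) ((0 : Euc d), ee d j)
          = mderiv (((0 : Euc d), ee d j) :: (L1 α' ++ L2 β')) (Kt K) (x, y) := rfl
      rw [hcons, ← mderiv_insert hK (((0 : Euc d), ee d j)) (L1 α') (L2 β')
        (by simp only [length_L1, length_L2]; omega)]
      rfl
    -- extension in the first slot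
    have C2 : ∀ (α' β : List (Fin d)), α'.length ≤ m → β.length ≤ m + 1 → ∀ (i : Fin d) (x y),
        ⟪Phi sec (i :: α') x, Phi sec β y⟫
          = mderiv (L1 (i :: α') ++ L2 β) (Kt K) (x, y) := by
      intro α' β hα' hβ i x y
      have hpair : ∀ u : Euc d, ⟪Phi sec α' u, Phi sec β y⟫
          = mderiv (L1 α' ++ L2 β) (Kt K) (u, y) := by
        intro u
        rcases Nat.lt_or_ge β.length (m + 1) with hlt | hge
        · exact ih hm α' β hα' (by omega) u y
        · match β, (by omega : β.length = m + 1) with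
          | j :: β', hlen =>
            exact C1 α' β' hα' (by simp at hlen; omega) j u y
      set Fb := mderiv (L1 α' ++ L2 β) (Kt K) with hFb
      have hdiff : DifferentiableAt ℝ Fb (x, y) := by
        apply differentiable_mderiv hK _ (x, y)
        simp only [List.length_append, length_L1, length_L2]
        omega
      have h1 : Tendsto
          (fun t : ℝ => ⟪t⁻¹ • (Phi sec α' (x + t • ee d i) - Phi sec α' x), Phi sec β y⟫)
          (𝓝[≠] (0:ℝ)) (𝓝 ⟪Phi sec (i :: α') x, Phi sec β y⟫) :=
        (tendstoPhi α' hα' i x).inner tendsto_const_nhds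
      have h2eq : (fun t : ℝ =>
          ⟪t⁻¹ • (Phi sec α' (x + t • ee d i) - Phi sec α' x), Phi sec β y⟫)
          = fun t : ℝ => t⁻¹ * (Fb (x + t • ee d i, y) - Fb (x, y)) := by
        funext t
        rw [real_inner_smul_left, inner_sub_left, hpair (x + t • ee d i), hpair x]
      rw [h2eq] at h1
      have h3 := tendsto_quot (f := Fb) ((x, y)) ((ee d i, (0 : Euc d))) hdiff
      have hpt : ∀ t : ℝ, ((x, y) : Euc d × Euc d) + t • ((ee d i, (0 : Euc d)))
          = (x + t • ee d i, y) := by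
        intro t; simp [Prod.ext_iff]
      simp only [hpt] at h3
      exact tendsto_nhds_unique h1 h3
    -- assembly
    intro α β hα hβ x y
    match α, hα with
    | [], _ =>
      rcases Nat.lt_or_ge β.length (m + 1) with hlt | hge
      · exact ih hm [] β (by simp) (by omega) x y
      · match β, (by omega : β.length = m + 1) with
        | j :: β', hlen => exact C1 [] β' (by simp) (by simp at hlen; omega) j x y
    | i :: α', hα => exact C2 α' β (by simp at hα; omega) hβ i x y

lemma prodDirs_mem {γ δ : List (Fin d)} : ∀ u ∈ L1 γ ++ L2 δ, u ∈ prodDirs d := by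
  intro u hu
  rcases List.mem_append.mp hu with h | h
  · obtain ⟨i, _, rfl⟩ := List.mem_map.mp h
    exact Or.inl ⟨i, rfl⟩
  · obtain ⟨i, _, rfl⟩ := List.mem_map.mp h
    exact Or.inr ⟨i, rfl⟩

lemma phi_bound (hK : ContDiff ℝ (2 * s + 1 : ℕ) (Kt K))
    (hsec : ∀ x y : Euc d, ⟪sec x, sec y⟫ = K x y)
    (hCb : KernelCb d (2 * s + 1) K)
    (γ : List (Fin d)) (hγ : γ.length ≤ s) :
    ∃ C : ℝ, ∀ x : Euc d, ‖Phi sec γ x‖ ≤ C := by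
  obtain ⟨C, hC⟩ := hCb.2 (L1 γ ++ L2 γ) prodDirs_mem
    (by simp only [List.length_append, length_L1, length_L2]; omega)
  refine ⟨Real.sqrt C, fun x => ?_⟩
  have h1 : ‖Phi sec γ x‖ ^ 2 = mderiv (L1 γ ++ L2 γ) (Kt K) (x, x) := by
    rw [← real_inner_self_eq_norm_sq]
    exact key_inner hK hsec s le_rfl γ γ hγ hγ x x
  have h2 : ‖Phi sec γ x‖ ^ 2 ≤ C := by
    rw [h1]
    exact le_trans (le_abs_self _) (hC (x, x))
  calc ‖Phi sec γ x‖ = Real.sqrt (‖Phi sec γ x‖ ^ 2) := (Real.sqrt_sq (norm_nonneg _)).symm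
    _ ≤ Real.sqrt C := Real.sqrt_le_sqrt h2

variable {emb : H →ₗ[ℝ] (Euc d → ℝ)}

lemma span_mderiv (hM : ∀ x y : Euc d, K x y = K y x)
    (hK : ContDiff ℝ (2 * s + 1 : ℕ) (Kt K))
    (hsec : ∀ x y : Euc d, ⟪sec x, sec y⟫ = K x y)
    (hsecemb : ∀ z : Euc d, emb (sec z) = K z)
    (f₀ : H) (hf₀ : f₀ ∈ Submodule.span ℝ (Set.range sec)) :
    ContDiff ℝ (2 * s + 1 : ℕ) (emb f₀) ∧ ∀ β : List (Fin d), β.length ≤ s →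
      mderiv (β.map (ee d)) (emb f₀) = fun x => ⟪Phi sec β x, f₀⟫ := by
  induction hf₀ using Submodule.span_induction with
  | mem z hz =>
    obtain ⟨z, rfl⟩ := hz
    constructor
    · rw [hsecemb z]
      exact hK.comp (contDiff_const.prodMk contDiff_id)
    · intro β hβ
      rw [hsecemb z]
      have hsym : (K z : Euc d → ℝ) = fun x => K x z := funext fun x => hM z x
      rw [mderiv_congr hsym]
      funext x
      have hslice := mderiv_slice hK (β.map (ee d))
        (by simp only [List.length_map]; omega) z x
      have hmap : (β.map (ee d)).map (fun v => ((v, 0) : Euc d × Euc d)) = L1 β := by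
        rw [List.map_map]; rfl
      have hkey := key_inner hK hsec s le_rfl β [] hβ (by simp) x z
      simp only [L2_nil, List.append_nil] at hkey
      calc mderiv (β.map (ee d)) (fun x' => K x' z) x
          = mderiv (L1 β) (Kt K) (x, z) := by rw [← hmap]; exact hslice
        _ = ⟪Phi sec β x, sec z⟫ := hkey.symm
  | zero =>
    constructor
    · rw [map_zero]
      exact contDiff_const
    · intro β _
      rw [map_zero]
      rw [show ((0 : Euc d → ℝ)) = fun _ : Euc d => (0:ℝ) from rfl, mderiv_zero]
      funext x
      simp
  | add a b _ _ hpa hpb =>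
    constructor
    · rw [map_add]
      exact hpa.1.add hpb.1
    · intro β hβ
      rw [map_add]
      have : (emb a + emb b : Euc d → ℝ) = fun x => emb a x + emb b x := rfl
      rw [this, mderiv_add (β.map (ee d)) hpa.1 hpb.1 (by simp only [List.length_map]; omega),
        hpa.2 β hβ, hpb.2 β hβ]
      funext x
      rw [inner_add_right]
  | smul c a _ hpa =>
    constructor
    · rw [LinearMap.map_smul]
      exact hpa.1.const_smul c
    · intro β hβ
      rw [LinearMap.map_smul]
      have : (c • emb a : Euc d → ℝ) = fun x => c • emb a x := rfl
      rw [this, mderiv_smul c (β.map (ee d)) hpa.1 (by simp only [List.length_map]; omega), hpa.2 β hβ]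
      funext x
      rw [real_inner_smul_right]
      simp

lemma exists_seq (hinj : Function.Injective emb)
    (hemb : ∀ (g : H) (x : Euc d), emb g x = ⟪g, sec x⟫) (f : H) :
    ∃ Fs : ℕ → H, (∀ n, Fs n ∈ Submodule.span ℝ (Set.range sec)) ∧
      Tendsto Fs atTop (𝓝 f) := by
  have htop : (Submodule.span ℝ (Set.range sec)).topologicalClosure = ⊤ := by
    rw [Submodule.topologicalClosure_eq_top_iff, Submodule.eq_bot_iff]
    intro g hg
    have hzero : emb g = 0 := by
      funext x
      rw [hemb g x, real_inner_comm]
      exact ((Submodule.mem_orthogonal _ g).mp hg) (sec x)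
        (Submodule.subset_span ⟨x, rfl⟩)
    apply hinj
    rw [hzero, map_zero]
  have hmem : f ∈ closure ((Submodule.span ℝ (Set.range sec) : Submodule ℝ H) : Set H) := by
    have h1 : f ∈ (Submodule.span ℝ (Set.range sec)).topologicalClosure := by
      rw [htop]; trivial
    rwa [← Submodule.topologicalClosure_coe]
  exact mem_closure_iff_seq_limit.mp hmem

lemma clm_decomp {d : ℕ} (L : Euc d →L[ℝ] ℝ) :
    L = ∑ i' : Fin d, L (ee d i') •
      (EuclideanSpace.proj i' : EuclideanSpace ℝ (Fin d) →L[ℝ] ℝ) := by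
  apply ContinuousLinearMap.ext
  intro w
  have hw : w = ∑ i' : Fin d, w i' • ee d i' := by
    have := (EuclideanSpace.basisFun (Fin d) ℝ).sum_repr w
    simp only [EuclideanSpace.basisFun_apply, EuclideanSpace.basisFun_repr] at this
    exact this.symm
  rw [ContinuousLinearMap.sum_apply]
  conv_lhs => rw [hw]
  rw [map_sum]
  refine Finset.sum_congr rfl fun i' _ => ?_
  rw [L.map_smul, ContinuousLinearMap.smul_apply,
    show (EuclideanSpace.proj i' : EuclideanSpace ℝ (Fin d) →L[ℝ] ℝ) w = w i' from rfl]
  simp [smul_eq_mul, mul_comm]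

lemma coord_abs_le_norm {d : ℕ} (w : Euc d) (i : Fin d) : |w i| ≤ ‖w‖ := by
  have h1 : ⟪w, ee d i⟫ = w i := by
    simp [ee, EuclideanSpace.inner_single_right]
  have h2 := abs_real_inner_le_norm w (ee d i)
  rw [h1] at h2
  have h3 : ‖ee d i‖ = 1 := by
    simp [ee, EuclideanSpace.norm_single]
  rw [h3, mul_one] at h2
  exact h2

lemma proj_norm_le {d : ℕ} (i : Fin d) :
    ‖(EuclideanSpace.proj i : EuclideanSpace ℝ (Fin d) →L[ℝ] ℝ)‖ ≤ 1 := by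
  apply ContinuousLinearMap.opNorm_le_bound _ zero_le_one
  intro w
  rw [one_mul]
  rw [show (EuclideanSpace.proj i : EuclideanSpace ℝ (Fin d) →L[ℝ] ℝ) w = w i from rfl, Real.norm_eq_abs]
  exact coord_abs_le_norm w i

lemma mderiv_emb (hM : ∀ x y : Euc d, K x y = K y x)
    (hK : ContDiff ℝ (2 * s + 1 : ℕ) (Kt K))
    (hCb : KernelCb d (2 * s + 1) K)
    (hsec : ∀ x y : Euc d, ⟪sec x, sec y⟫ = K x y)
    (hsecemb : ∀ z : Euc d, emb (sec z) = K z)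
    (hemb : ∀ (g : H) (x : Euc d), emb g x = ⟪g, sec x⟫)
    (hinj : Function.Injective emb) (f : H) :
    ∀ β : List (Fin d), β.length ≤ s →
      mderiv (β.map (ee d)) (emb f) = fun x => ⟪Phi sec β x, f⟫ := by
  obtain ⟨Fs, hFsmem, hFslim⟩ := exists_seq hinj hemb f
  have hspan := fun n => span_mderiv hM hK hsec hsecemb (Fs n) (hFsmem n)
  intro β
  induction β with
  | nil =>
    intro _
    funext x
    show emb f x = _
    rw [hemb f x, real_inner_comm]
    rfl
  | cons i β' ihβ =>
    intro hβ
    have hβ' : β'.length ≤ s := by simp only [List.length_cons] at hβ; omega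
    have hβ'' : ∀ i' : Fin d, (i' :: β').length ≤ s := by
      intro i'; simp only [List.length_cons] at hβ ⊢; omega
    set u : ℕ → Euc d → ℝ := fun n x => ⟪Phi sec β' x, Fs n⟫ with hu
    set v : Euc d → ℝ := fun x => ⟪Phi sec β' x, f⟫ with hv
    set D : ℕ → Euc d → (Euc d →L[ℝ] ℝ) :=
      fun n x => fderiv ℝ (mderiv (β'.map (ee d)) (emb (Fs n))) x with hD
    set g' : Euc d → (Euc d →L[ℝ] ℝ) := fun x => ∑ i' : Fin d, ⟪Phi sec (i' :: β') x, f⟫ •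
      (EuclideanSpace.proj i' : EuclideanSpace ℝ (Fin d) →L[ℝ] ℝ) with hg'
    have hdiffn : ∀ n, Differentiable ℝ (mderiv (β'.map (ee d)) (emb (Fs n))) := fun n =>
      differentiable_mderiv (hspan n).1 (by simp only [List.length_map]; omega)
    have hhas : ∀ (n : ℕ) (x : Euc d), HasFDerivAt (u n) (D n x) x := by
      intro n x
      have hwitness : mderiv (β'.map (ee d)) (emb (Fs n)) = u n := (hspan n).2 β' hβ'
      rw [← hwitness]
      exact ((hdiffn n) x).hasFDerivAt
    have hDrep : ∀ n x, D n x = ∑ i' : Fin d, ⟪Phi sec (i' :: β') x, Fs n⟫ •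
        (EuclideanSpace.proj i' : EuclideanSpace ℝ (Fin d) →L[ℝ] ℝ) := by
      intro n x
      rw [clm_decomp (D n x)]
      refine Finset.sum_congr rfl fun i' _ => ?_
      congr 1
      have h1 : D n x (ee d i') = mderiv ((i' :: β').map (ee d)) (emb (Fs n)) x := rfl
      rw [h1, (hspan n).2 (i' :: β') (hβ'' i')]
    choose C hC using fun i' : Fin d => phi_bound hK hsec hCb (i' :: β') (hβ'' i')
    have hCnonneg : ∀ i' : Fin d, 0 ≤ C i' := fun i' =>
      le_trans (norm_nonneg _) (hC i' 0)
    set Csum : ℝ := ∑ i' : Fin d, C i' with hCsum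
    have hCsumnonneg : 0 ≤ Csum := Finset.sum_nonneg fun i' _ => hCnonneg i'
    have hdistb : ∀ n x, dist (g' x) (D n x) ≤ Csum * ‖f - Fs n‖ := by
      intro n x
      rw [dist_eq_norm, hDrep n x, hg']
      have : (∑ i' : Fin d, ⟪Phi sec (i' :: β') x, f⟫ •
            (EuclideanSpace.proj i' : EuclideanSpace ℝ (Fin d) →L[ℝ] ℝ))
          - (∑ i' : Fin d, ⟪Phi sec (i' :: β') x, Fs n⟫ •
            (EuclideanSpace.proj i' : EuclideanSpace ℝ (Fin d) →L[ℝ] ℝ))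
          = ∑ i' : Fin d, ⟪Phi sec (i' :: β') x, f - Fs n⟫ •
            (EuclideanSpace.proj i' : EuclideanSpace ℝ (Fin d) →L[ℝ] ℝ) := by
        rw [← Finset.sum_sub_distrib]
        refine Finset.sum_congr rfl fun i' _ => ?_
        rw [← sub_smul, ← inner_sub_right]
      rw [this]
      calc ‖∑ i' : Fin d, ⟪Phi sec (i' :: β') x, f - Fs n⟫ •
            (EuclideanSpace.proj i' : EuclideanSpace ℝ (Fin d) →L[ℝ] ℝ)‖
          ≤ ∑ i' : Fin d, ‖⟪Phi sec (i' :: β') x, f - Fs n⟫ •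
            (EuclideanSpace.proj i' : EuclideanSpace ℝ (Fin d) →L[ℝ] ℝ)‖ :=
            norm_sum_le _ _
        _ ≤ ∑ i' : Fin d, C i' * ‖f - Fs n‖ := by
            refine Finset.sum_le_sum fun i' _ => ?_
            calc ‖⟪Phi sec (i' :: β') x, f - Fs n⟫ •
                  (EuclideanSpace.proj i' : EuclideanSpace ℝ (Fin d) →L[ℝ] ℝ)‖
                ≤ ‖⟪Phi sec (i' :: β') x, f - Fs n⟫‖ *
                  ‖(EuclideanSpace.proj i' : EuclideanSpace ℝ (Fin d) →L[ℝ] ℝ)‖ :=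
                  ContinuousLinearMap.opNorm_smul_le _ _
              _ ≤ ‖⟪Phi sec (i' :: β') x, f - Fs n⟫‖ * 1 := by
                  apply mul_le_mul_of_nonneg_left (proj_norm_le i') (norm_nonneg _)
              _ = ‖⟪Phi sec (i' :: β') x, f - Fs n⟫‖ := mul_one _
              _ ≤ ‖Phi sec (i' :: β') x‖ * ‖f - Fs n‖ := norm_inner_le_norm _ _
              _ ≤ C i' * ‖f - Fs n‖ := by
                  apply mul_le_mul_of_nonneg_right (hC i' x) (norm_nonneg _)
        _ = Csum * ‖f - Fs n‖ := by rw [← Finset.sum_mul]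
    have hnormlim : Tendsto (fun n => ‖f - Fs n‖) atTop (𝓝 0) := by
      have h1 : Tendsto (fun n => Fs n - f) atTop (𝓝 0) := by
        simpa using hFslim.sub (tendsto_const_nhds (x := f))
      have h2 := h1.norm
      simp only [norm_zero] at h2
      convert h2 using 2 with n
      rw [norm_sub_rev]
    have hDlim : TendstoUniformly D g' atTop := by
      rw [Metric.tendstoUniformly_iff]
      intro ε hε
      have hev : ∀ᶠ n in atTop, Csum * ‖f - Fs n‖ < ε := by
        have h3 : Tendsto (fun n => Csum * ‖f - Fs n‖) atTop (𝓝 (Csum * 0)) :=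
          hnormlim.const_mul Csum
        rw [mul_zero] at h3
        exact h3.eventually (gt_mem_nhds hε)
      filter_upwards [hev] with n hn x
      exact lt_of_le_of_lt (hdistb n x) hn
    have hpt : ∀ x, Tendsto (fun n => u n x) atTop (𝓝 (v x)) := fun x =>
      tendsto_const_nhds.inner hFslim
    have hvder : ∀ x, HasFDerivAt v (g' x) x := fun x =>
      hasFDerivAt_of_tendstoUniformly hDlim hhas hpt x
    funext x
    have h1 : mderiv ((i :: β').map (ee d)) (emb f) x
        = fderiv ℝ (mderiv (β'.map (ee d)) (emb f)) x (ee d i) := rfl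
    rw [h1, ihβ hβ', (hvder x).fderiv]
    simp only [hg', ContinuousLinearMap.sum_apply]
    simp only [ContinuousLinearMap.smul_apply,
      show ∀ (i' : Fin d) (w : Euc d), (EuclideanSpace.proj i' : EuclideanSpace ℝ (Fin d) →L[ℝ] ℝ) w = w i' from fun _ _ => rfl,
      smul_eq_mul]
    rw [Finset.sum_eq_single i]
    · have : (ee d i) i = 1 := by simp [ee, EuclideanSpace.single_apply]
      rw [this, mul_one]
    · intro b _ hb
      have : (ee d i) b = 0 := by
        simp [ee, EuclideanSpace.single_apply, hb]
      rw [this, mul_zero]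
    · intro hi
      simp at hi

end Kernel

end DRP

/-- **Differential reproducing property** (Theorem 2.8 (i)–(ii)).
If `K` is a Mercer kernel on `ℝ^d` of class `C_b^{2s+1}(ℝ^d × ℝ^d)`, then for every `x ∈ ℝ^d`
and every multi-index `α` with `|α| ≤ s` (encoded as a list of coordinates of length `≤ s`),
the function `(D^α K)_x : y ↦ D^α_x K(x,y)` belongs to the RKHS `H_K`, and the
partial-derivative reproducing property `D^α f (x) = ⟪(D^α K)_x, f⟫` holds for every
`f ∈ H_K`. -/
theorem differential_reproducing_property
    {d s : ℕ} (K : Euc d → Euc d → ℝ)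
    (hMercer : IsMercer K)
    (hCb : KernelCb d (2 * s + 1) K)
    {H : Type*} [NormedAddCommGroup H] [InnerProductSpace ℝ H] [CompleteSpace H]
    (emb : H →ₗ[ℝ] (Euc d → ℝ)) (sec : Euc d → H)
    (hRKHS : IsRKHS K emb sec) :
    ∀ α : List (Fin d), α.length ≤ s → ∀ x : Euc d,
      (∃ g : H, emb g = fun y => mderiv (α.map (ee d)) (fun x' => K x' y) x) ∧
      ∀ g : H, (emb g = fun y => mderiv (α.map (ee d)) (fun x' => K x' y) x) →
        ∀ f : H, mderiv (α.map (ee d)) (emb f) x = ⟪g, f⟫ := by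
  obtain ⟨hsym, -⟩ := hMercer
  obtain ⟨hinj, hsecemb, hemb⟩ := hRKHS
  have hK : ContDiff ℝ (2 * s + 1 : ℕ) (DRP.Kt K) := hCb.1
  have hsec : ∀ x y : Euc d, ⟪sec x, sec y⟫ = K x y := by
    intro x y
    have h1 := hemb (sec x) y
    rw [hsecemb x] at h1
    exact h1.symm
  intro α hα x
  have hembPhi : emb (DRP.Phi sec α x) = fun y => mderiv (α.map (ee d)) (fun x' => K x' y) x := by
    funext y
    rw [hemb (DRP.Phi sec α x) y]
    have hkey := DRP.key_inner hK hsec s le_rfl α [] hα (by simp) x y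
    simp only [DRP.L2_nil, List.append_nil] at hkey
    have hmap : (α.map (ee d)).map (fun v => ((v, 0) : Euc d × Euc d)) = DRP.L1 α := by
      rw [List.map_map]; rfl
    have hslice := DRP.mderiv_slice hK (α.map (ee d))
      (by simp only [List.length_map]; omega) y x
    calc ⟪DRP.Phi sec α x, sec y⟫ = mderiv (DRP.L1 α) (DRP.Kt K) (x, y) := hkey
      _ = mderiv (α.map (ee d)) (fun x' => K x' y) x := by rw [← hmap]; exact hslice.symm
  refine ⟨⟨DRP.Phi sec α x, hembPhi⟩, ?_⟩
  intro g hg f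
  have hgPhi : g = DRP.Phi sec α x := hinj (by rw [hg, hembPhi])
  rw [hgPhi]
  have hD := DRP.mderiv_emb hsym hK hCb hsec hsecemb hemb hinj f α hα
  rw [hD]
end
end

section
/- Let K ∈ C_b^3(ℝ^{2d} × ℝ^{2d}) be a Mercer kernel, and let Z^{(1)},…,Z^{(N)} ∈ ℝ^{2d}. Then the differential Gram matrix ∇_{1,2}K(Z_N, Z_N) ∈ ℝ^{2dN × 2dN}, whose (n,n') block is the 2d × 2d matrix of mixed partial derivatives ∇_{1,2}K(Z^{(n)}, Z^{(n')}) of K with respect to its first and second arguments, is positive semidefinite. -/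
noncomputable section
open MeasureTheory RealInnerProductSpace Filter

/-- The differential Gram matrix `∇_{1,2}K(Z_N, Z_N) ∈ ℝ^{2dN × 2dN}` whose
`((n,i),(n',j))` entry is the mixed partial derivative `∂²K/∂z_i ∂z'_j (Z^{(n)}, Z^{(n')})`
of `K` with respect to its first and second arguments. -/
def gramD {n N : ℕ} (K : Euc n → Euc n → ℝ) (Z : Fin N → Euc n) :
    Matrix (Fin N × Fin n) (Fin N × Fin n) ℝ :=
  Matrix.of fun p q : Fin N × Fin n =>
    dirDeriv (ee n p.2) (fun x => dirDeriv (ee n q.2) (K x) (Z q.1)) (Z p.1)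

/-!
For a `C²` kernel, the mixed partial `∂²K/∂x_i ∂x'_j (z, z')` is the limit as `h → 0⁺` of the
symmetric second difference `h⁻² (K(z + h e_i, z' + h e_j) - K(z + h e_i, z') - K(z, z' + h e_j)
+ K(z, z'))`. Taken over all pairs of indices, these difference quotients form the Gram matrix of
the differences `K(Z⁽ⁿ⁾ + h e_i, ·) - K(Z⁽ⁿ⁾, ·)`, which is positive semidefinite because `K` is a
Mercer kernel. Positive semidefinite matrices form a closed set, so the limit, the differential
Gram matrix, is positive semidefinite too.
-/

open Topology Asymptotics

theorem Matrix.isClosed_setOf_posSemidef {ι R : Type*} [Fintype ι] [Ring R] [PartialOrder R]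
    [StarRing R] [TopologicalSpace R] [IsTopologicalRing R] [ContinuousStar R]
    [OrderClosedTopology R] :
    IsClosed {M : Matrix ι ι R | M.PosSemidef} := by
  simp only [Matrix.posSemidef_iff_dotProduct_mulVec, Set.ofPred_and, Set.ofPred_forall]
  exact (isClosed_eq continuous_id.matrix_conjTranspose continuous_id).inter <|
    isClosed_iInter fun x => isClosed_le continuous_const <|
      continuous_const.dotProduct (continuous_id.matrix_mulVec continuous_const)

theorem ContDiff.tendsto_inv_sq_smul_secondDiff {E F : Type*} [NormedAddCommGroup E]
    [NormedSpace ℝ E] [NormedAddCommGroup F] [NormedSpace ℝ F] {f : E → F}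
    (hf : ContDiff ℝ 2 f) (z u w : E) :
    Tendsto
      (fun h : ℝ => (h ^ 2)⁻¹ • (f (z + h • u + h • w) - f (z + h • u) - f (z + h • w) + f z))
      (𝓝[>] 0) (𝓝 (fderiv ℝ (fderiv ℝ f) z u w)) := by
  have hf' (x) (_ : x ∈ interior (Set.univ : Set E)) : HasFDerivAt f (fderiv ℝ f x) x :=
    (hf.differentiable two_ne_zero x).hasFDerivAt
  have hf'' : HasFDerivWithinAt (fderiv ℝ f) (fderiv ℝ (fderiv ℝ f) z) (interior .univ) z :=
    ((hf.fderiv_right (m := 1) le_rfl).differentiable one_ne_zero z).hasFDerivAt.hasFDerivWithinAt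
  have taylor (v : E) := convex_univ.taylor_approx_two_segment hf' (Set.mem_univ z) hf''
    (v := v) (w := w) (by simp) (by simp)
  have key : (fun h : ℝ => f (z + h • u + h • w) - f (z + h • u) - f (z + h • w) + f z
      - h ^ 2 • fderiv ℝ (fderiv ℝ f) z u w) =o[𝓝[>] 0] fun h => h ^ 2 :=
    ((taylor u).sub (taylor 0)).congr_left fun h => by simp; abel
  have := key.tendsto_inv_smul_nhds_zero.add_const (fderiv ℝ (fderiv ℝ f) z u w)
  rw [zero_add] at this
  refine this.congr' (eventually_mem_nhdsWithin.mono fun h (hh : 0 < h) => ?_)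
  rw [smul_sub, inv_smul_smul₀ (by positivity), sub_add_cancel]

theorem dirDeriv_dirDeriv_eq_fderiv_fderiv_uncurry {E E' : Type*} [NormedAddCommGroup E]
    [NormedSpace ℝ E] [NormedAddCommGroup E'] [NormedSpace ℝ E'] {K : E → E' → ℝ}
    (hK : ContDiff ℝ 2 (Function.uncurry K)) (a : E) (b : E') (u : E) (w : E') :
    dirDeriv u (fun x => dirDeriv w (K x) b) a =
      fderiv ℝ (fderiv ℝ (Function.uncurry K)) (a, b) (u, 0) (0, w) := by
  have hK' : Differentiable ℝ (Function.uncurry K) := hK.differentiable two_ne_zero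
  have hK'' : Differentiable ℝ (fderiv ℝ (Function.uncurry K)) :=
    (hK.fderiv_right (m := 1) le_rfl).differentiable one_ne_zero
  have partial_snd : (fun x => dirDeriv w (K x) b) =
      fun x => fderiv ℝ (Function.uncurry K) (x, b) (0, w) := funext fun x => by
    have : HasFDerivAt (K x)
        ((fderiv ℝ (Function.uncurry K) (x, b)).comp (ContinuousLinearMap.inr ℝ E E')) b :=
      (hK' (x, b)).hasFDerivAt.comp b (hasFDerivAt_prodMk_right x b)
    simp [dirDeriv, this.fderiv]
  have partial_fst : HasFDerivAt (fun x => fderiv ℝ (Function.uncurry K) (x, b) (0, w))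
      (((ContinuousLinearMap.apply ℝ ℝ ((0 : E), w)).comp
        (fderiv ℝ (fderiv ℝ (Function.uncurry K)) (a, b))).comp
        (ContinuousLinearMap.inl ℝ E E')) a :=
    ((ContinuousLinearMap.apply ℝ ℝ ((0 : E), w)).hasFDerivAt.comp (a, b)
      (hK'' (a, b)).hasFDerivAt).comp (f := fun x => (x, b)) a (hasFDerivAt_prodMk_left a b)
  rw [dirDeriv, partial_snd, partial_fst.fderiv]
  simp

def diffGram {ι X : Type*} (K : X → X → ℝ) (y x : ι → X) : Matrix ι ι ℝ :=
  Matrix.of fun i j => K (y i) (y j) - K (y i) (x j) - K (x i) (y j) + K (x i) (x j)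

open scoped Matrix in
theorem diffGram_eq_conjTranspose_mul_mul {ι X : Type*} [Fintype ι] [DecidableEq ι]
    (K : X → X → ℝ) (y x : ι → X) :
    let B : Matrix (ι ⊕ ι) ι ℝ := Matrix.fromRows 1 (-1)
    diffGram K y x = Bᴴ * Matrix.of (fun a b => K (Sum.elim y x a) (Sum.elim y x b)) * B := by
  ext i j
  simp [diffGram, Matrix.mul_apply, Fintype.sum_sum_type, Matrix.one_apply]
  ring

theorem tendsto_inv_sq_smul_diffGram {ι E : Type*} [NormedAddCommGroup E] [NormedSpace ℝ E]
    {K : E → E → ℝ} (hK : ContDiff ℝ 2 (Function.uncurry K)) (x v : ι → E) :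
    Tendsto (fun h : ℝ => (h ^ 2)⁻¹ • diffGram K (x + h • v) x) (𝓝[>] 0)
      (𝓝 (Matrix.of fun i j => dirDeriv (v i) (fun y => dirDeriv (v j) (K y) (x j)) (x i))) := by
  refine tendsto_pi_nhds.2 fun i => tendsto_pi_nhds.2 fun j => ?_
  rw [Matrix.of_apply, dirDeriv_dirDeriv_eq_fderiv_fderiv_uncurry hK]
  refine (hK.tendsto_inv_sq_smul_secondDiff (x i, x j) (v i, 0) (0, v j)).congr fun h => ?_
  simp [diffGram]

theorem IsMercer.sum_nonneg {n : ℕ} {K : Euc n → Euc n → ℝ} (hK : IsMercer K)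
    {ι : Type*} [Fintype ι] (x : ι → Euc n) (c : ι → ℝ) :
    0 ≤ ∑ i, ∑ j, c i * c j * K (x i) (x j) := by
  let e := (Fintype.equivFin ι).symm
  have reindex (f : ι → ι → ℝ) : ∑ i, ∑ j, f (e i) (e j) = ∑ i, ∑ j, f i j := by
    simp only [Equiv.sum_comp]
    exact e.sum_comp fun i => ∑ j, f i j
  exact reindex (fun i j => c i * c j * K (x i) (x j)) ▸ hK.2 _ (x ∘ e) (c ∘ e)

theorem IsMercer.posSemidef_gram {n : ℕ} {K : Euc n → Euc n → ℝ} (hK : IsMercer K)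
    {ι : Type*} [Fintype ι] (x : ι → Euc n) :
    (Matrix.of fun i j => K (x i) (x j)).PosSemidef := by
  refine .of_dotProduct_mulVec_nonneg (Matrix.IsHermitian.ext fun i j => ?_) fun c => ?_
  · simp [hK.1]
  · refine (hK.sum_nonneg x c).trans_eq ?_
    simp only [dotProduct, Matrix.mulVec, Matrix.of_apply, Pi.star_apply, star_trivial,
      Finset.mul_sum]
    exact Finset.sum_congr rfl fun i _ => Finset.sum_congr rfl fun j _ => by ring

theorem IsMercer.posSemidef_diffGram {n : ℕ} {K : Euc n → Euc n → ℝ} (hK : IsMercer K)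
    {ι : Type*} [Fintype ι] (y x : ι → Euc n) : (diffGram K y x).PosSemidef := by
  classical
  rw [diffGram_eq_conjTranspose_mul_mul]
  exact (hK.posSemidef_gram _).conjTranspose_mul_mul_same _

/-- Proposition 3.4: for a Mercer kernel `K ∈ C_b^3(ℝ^{2d} × ℝ^{2d})` and any data points
`Z^{(1)}, …, Z^{(N)} ∈ ℝ^{2d}`, the differential Gram matrix `∇_{1,2}K(Z_N, Z_N)` is
positive semidefinite. -/
theorem differential_gram_matrix_posSemidef
    {d N : ℕ} (K : Euc (d + d) → Euc (d + d) → ℝ)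
    (hMercer : IsMercer K)
    (hCb : KernelCb (d + d) 3 K)
    (Z : Fin N → Euc (d + d)) :
    (gramD K Z).PosSemidef := by
  have hK : ContDiff ℝ 2 (Function.uncurry K) := hCb.1.of_le (by norm_num)
  exact Matrix.isClosed_setOf_posSemidef.mem_of_tendsto
    (tendsto_inv_sq_smul_diffGram hK (fun p : Fin N × Fin (d + d) => Z p.1) fun p => ee _ p.2)
    (Eventually.of_forall fun h => (hMercer.posSemidef_diffGram _ _).smul (by positivity))
end
end

section
/- Differential Representer Theorem: let K ∈ C_b^3(ℝ^{2d} × ℝ^{2d}) be a Mercer kernel with RKHS H_K, Z^{(1)},…,Z^{(N)} ∈ ℝ^{2d}, X_{σ²,N} ∈ ℝ^{2dN}, J the canonical symplectic matrix, 𝕁 = diag(J,…,J). Then for every λ > 0 the unique minimizer ĥ_{λ,N} over H_K of the regularized empirical risk R̂_{λ,N}(h) := (1/N) Σ_{n=1}^N ‖J∇h(Z^{(n)}) − X^{(n)}_{σ²}‖² + λ‖h‖²_{H_K} can be represented as ĥ_{λ,N} = Σ_{i=1}^N ⟨ĉ_i, ∇₁K(Z^{(i)}, ·)⟩ with coefficient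 vectors ĉ_1,…,ĉ_N ∈ ℝ^{2d}, and their vectorization ĉ ∈ ℝ^{2dN} is given by ĉ = (∇_{1,2}K(Z_N, Z_N) + λN I)^{-1} 𝕁ᵀ X_{σ²,N}. -/
noncomputable section
open MeasureTheory RealInnerProductSpace Filter

/-- The canonical symplectic matrix `J = [[0, I_d], [-I_d, 0]]` on `ℝ^{2d} = ℝ^{d+d}`. -/
def Jmat (d : ℕ) : Matrix (Fin (d + d)) (Fin (d + d)) ℝ :=
  Matrix.reindex finSumFinEquiv finSumFinEquiv
    (Matrix.fromBlocks (0 : Matrix (Fin d) (Fin d) ℝ) 1 (-1) 0)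

/-- Matrix-vector multiplication on Euclidean space. -/
def mulVecE {n : ℕ} (M : Matrix (Fin n) (Fin n) ℝ) (v : Euc n) : Euc n :=
  (WithLp.equiv 2 (Fin n → ℝ)).symm (M.mulVec ((WithLp.equiv 2 (Fin n → ℝ)) v))

/-- The Hamiltonian vector field `X_f = J ∇f` of a Hamiltonian function `f : ℝ^{2d} → ℝ`. -/
def JgradE (d : ℕ) (f : Euc (d + d) → ℝ) (x : Euc (d + d)) : Euc (d + d) :=
  mulVecE (Jmat d) (gradient f x)

/-- `Dsec x i` is the element `(∂_{1,i} K)_x = (∂K/∂x_i) (x, ·)` of the RKHS; these elements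
satisfy the differential reproducing property `∂_i f (x) = ⟪Dsec x i, f⟫` (Theorem 2.8 of the
paper), so that `fun i => Dsec x i` realizes `∇₁K(x, ·)` inside the RKHS. -/
def IsDiffSec {n : ℕ} {H : Type*} [NormedAddCommGroup H] [InnerProductSpace ℝ H]
    (K : Euc n → Euc n → ℝ) (emb : H →ₗ[ℝ] (Euc n → ℝ)) (Dsec : Euc n → Fin n → H) : Prop :=
  (∀ (x : Euc n) (i : Fin n),
      emb (Dsec x i) = fun y => dirDeriv (ee n i) (fun x' => K x' y) x) ∧
    ∀ (f : H) (x : Euc n) (i : Fin n), dirDeriv (ee n i) (emb f) x = ⟪Dsec x i, f⟫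

/-- The block-diagonal matrix `𝕁 = diag(J, …, J) ∈ ℝ^{2dN × 2dN}`. -/
def bigJ (d N : ℕ) : Matrix (Fin N × Fin (d + d)) (Fin N × Fin (d + d)) ℝ :=
  Matrix.of fun p q => if p.1 = q.1 then Jmat d p.2 q.2 else 0

/-! By the differential reproducing property, `h ↦ (J∇h(Z⁽ⁿ⁾))ᵢ` is the inner product with
`u₍ₙ,ᵢ₎ = Σ_q 𝕁₍ₙ,ᵢ₎,q ∂_{1,q}K(Z_q, ·)`, so `R̂_{λ,N}` is `1/N` times the ridge functional
`Σ_p (⟪u_p, h⟫ - y_p)² + λN ‖h‖²`. Completing the square around a solution `g` of its normal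
equation shows that `g` is the unique minimizer. Because `𝕁ᵀ𝕁 = 1`, the ansatz
`g = Σ_q c_q ∂_{1,q}K(Z_q, ·)` solves the normal equation as soon as `(G + λN) c = 𝕁ᵀ y`, where `G`
is the Gram matrix of the differential kernel sections; `G + λN` is positive definite, and by
symmetry of `K` it equals `∇_{1,2}K(Z_N, Z_N) + λN I`. -/

namespace RegularizedLeastSquares

open scoped Matrix

variable {H : Type*} [NormedAddCommGroup H] [InnerProductSpace ℝ H] {ι κ : Type*} [Fintype κ]

theorem inner_sum_smul_sum_smul (A : Matrix ι κ ℝ) (w : κ → H) (c : κ → ℝ) (p : ι) :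
    ⟪∑ j, A p j • w j, ∑ q, c q • w q⟫ = (A *ᵥ (Matrix.gram ℝ w *ᵥ c)) p := by
  simp only [sum_inner, inner_sum, real_inner_smul_left, real_inner_smul_right, Matrix.mulVec,
    dotProduct, Matrix.gram_apply, Finset.mul_sum]
  rw [Finset.sum_comm]
  exact Finset.sum_congr rfl fun j _ => Finset.sum_congr rfl fun q _ => by ring

variable [Fintype ι]

theorem sum_smul_sum_smul (a : ι → ℝ) (A : Matrix ι κ ℝ) (w : κ → H) :
    ∑ p, a p • ∑ j, A p j • w j = ∑ j, (a ᵥ* A) j • w j := by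
  simp only [Finset.smul_sum, smul_smul, Matrix.vecMul, dotProduct, Finset.sum_smul]
  exact Finset.sum_comm

def risk (u : ι → H) (y : ι → ℝ) (μ : ℝ) (h : H) : ℝ :=
  ∑ p, (⟪u p, h⟫ - y p) ^ 2 + μ * ‖h‖ ^ 2

def NormalEq (u : ι → H) (y : ι → ℝ) (μ : ℝ) (g : H) : Prop :=
  ∑ p, (⟪u p, g⟫ - y p) • u p + μ • g = 0

theorem risk_eq_add_of_normalEq {u : ι → H} {y : ι → ℝ} {μ : ℝ} {g : H}
    (hg : NormalEq u y μ g) (h : H) :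
    risk u y μ h = risk u y μ g + (∑ p, ⟪u p, h - g⟫ ^ 2 + μ * ‖h - g‖ ^ 2) := by
  have hcross : ∑ p, (⟪u p, g⟫ - y p) * ⟪u p, h - g⟫ + μ * ⟪g, h - g⟫ = 0 := by
    have := congrArg (⟪·, h - g⟫) hg
    simpa only [inner_add_left, sum_inner, real_inner_smul_left, inner_zero_left] using this
  have hnorm : ‖h‖ ^ 2 = ‖g‖ ^ 2 + 2 * ⟪g, h - g⟫ + ‖h - g‖ ^ 2 := by
    simpa using norm_add_sq_real g (h - g)
  have hsum : ∑ p, (⟪u p, h⟫ - y p) ^ 2 = ∑ p, (⟪u p, g⟫ - y p) ^ 2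
      + 2 * ∑ p, (⟪u p, g⟫ - y p) * ⟪u p, h - g⟫ + ∑ p, ⟪u p, h - g⟫ ^ 2 := by
    rw [Finset.mul_sum, ← Finset.sum_add_distrib, ← Finset.sum_add_distrib]
    refine Finset.sum_congr rfl fun p _ => ?_
    rw [inner_sub_right]
    ring
  rw [risk, risk, hsum, hnorm]
  linear_combination 2 * hcross

theorem isMinimizer_iff_eq_of_normalEq {u : ι → H} {y : ι → ℝ} {μ : ℝ} (hμ : 0 < μ) {g : H}
    (hg : NormalEq u y μ g) (g' : H) :
    (∀ h, risk u y μ g' ≤ risk u y μ h) ↔ g' = g := by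
  constructor
  · intro hmin
    have hle := hmin g
    rw [risk_eq_add_of_normalEq hg g'] at hle
    have hsq : 0 ≤ ∑ p, ⟪u p, g' - g⟫ ^ 2 := Finset.sum_nonneg fun p _ => sq_nonneg _
    have hzero : ‖g' - g‖ ^ 2 = 0 := by nlinarith [sq_nonneg ‖g' - g‖]
    simpa [sub_eq_zero] using hzero
  · rintro rfl h
    rw [risk_eq_add_of_normalEq hg h]
    have hsq : 0 ≤ ∑ p, ⟪u p, h - g'⟫ ^ 2 := Finset.sum_nonneg fun p _ => sq_nonneg _
    nlinarith [sq_nonneg ‖h - g'‖]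

variable [DecidableEq κ]

theorem isUnit_gram_add_smul_one (w : κ → H) {μ : ℝ} (hμ : 0 < μ) :
    IsUnit (Matrix.gram ℝ w + μ • 1) :=
  (Matrix.PosDef.posSemidef_add (Matrix.posSemidef_gram ℝ w) (Matrix.PosDef.one.smul hμ)).isUnit

theorem normalEq_sum_smul {A : Matrix ι κ ℝ} (hA : Aᵀ * A = 1) (w : κ → H) (y : ι → ℝ)
    {μ : ℝ} (hμ : 0 < μ) :
    NormalEq (fun p => ∑ j, A p j • w j) y μ
      (∑ q, ((Matrix.gram ℝ w + μ • 1)⁻¹ *ᵥ (Aᵀ *ᵥ y)) q • w q) := by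
  set M := Matrix.gram ℝ w + μ • (1 : Matrix κ κ ℝ)
  set c := M⁻¹ *ᵥ (Aᵀ *ᵥ y)
  have hdet : IsUnit M.det := (Matrix.isUnit_iff_isUnit_det M).mp (isUnit_gram_add_smul_one w hμ)
  have hMc : M *ᵥ c = Aᵀ *ᵥ y := by
    rw [Matrix.mulVec_mulVec, Matrix.mul_nonsing_inv _ hdet, Matrix.one_mulVec]
  have hresid : (fun p => ⟪∑ j, A p j • w j, ∑ q, c q • w q⟫ - y p)
      = A *ᵥ (Matrix.gram ℝ w *ᵥ c) - y :=
    funext fun p => by rw [inner_sum_smul_sum_smul]; rfl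
  have hmix : (A *ᵥ (Matrix.gram ℝ w *ᵥ c) - y) ᵥ* A = -(μ • c) := by
    rw [Matrix.sub_vecMul, ← Matrix.mulVec_transpose, ← Matrix.mulVec_transpose,
      Matrix.mulVec_mulVec, hA, Matrix.one_mulVec, ← hMc, Matrix.add_mulVec, Matrix.smul_mulVec,
      Matrix.one_mulVec]
    abel
  rw [NormalEq, sum_smul_sum_smul, hresid, hmix, Finset.smul_sum, ← Finset.sum_add_distrib]
  refine Finset.sum_eq_zero fun j _ => ?_
  simp [smul_smul]

end RegularizedLeastSquares

open scoped Matrix Kronecker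

theorem Jmat_transpose_mul_self (d : ℕ) : (Jmat d)ᵀ * Jmat d = 1 := by
  rw [Jmat, Matrix.reindex_apply, Matrix.transpose_submatrix,
    Matrix.submatrix_mul_equiv _ _ _ finSumFinEquiv.symm _, Matrix.fromBlocks_transpose,
    Matrix.fromBlocks_multiply]
  simp [Matrix.fromBlocks_one]

theorem bigJ_eq_one_kronecker (d N : ℕ) : bigJ d N = 1 ⊗ₖ Jmat d := by
  ext p q
  simp [bigJ, Matrix.one_apply]

theorem bigJ_transpose_mul_self (d N : ℕ) : (bigJ d N)ᵀ * bigJ d N = 1 := by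
  have htranspose : ((1 : Matrix (Fin N) (Fin N) ℝ) ⊗ₖ Jmat d)ᵀ = 1ᵀ ⊗ₖ (Jmat d)ᵀ :=
    (Matrix.kroneckerMap_transpose _ _ _).symm
  rw [bigJ_eq_one_kronecker, htranspose, ← Matrix.mul_kronecker_mul, Matrix.transpose_one,
    Matrix.one_mul, Jmat_transpose_mul_self, Matrix.one_kronecker_one]

section DiffSec

variable {n : ℕ} {H : Type*} [NormedAddCommGroup H] [InnerProductSpace ℝ H]
  {K : Euc n → Euc n → ℝ} {emb : H →ₗ[ℝ] (Euc n → ℝ)} {Dsec : Euc n → Fin n → H}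

theorem gramD_eq_gram (hsymm : ∀ x y, K x y = K y x) (hDsec : IsDiffSec K emb Dsec) {N : ℕ}
    (Z : Fin N → Euc n) : gramD K Z = Matrix.gram ℝ fun p => Dsec (Z p.1) p.2 := by
  ext p q
  have hsec : emb (Dsec (Z q.1) q.2) = fun x => dirDeriv (ee n q.2) (K x) (Z q.1) := by
    rw [hDsec.1]
    funext x
    rw [show (fun x' => K x' x) = K x from funext fun x' => hsymm x' x]
  rw [gramD, Matrix.of_apply, Matrix.gram_apply, ← hsec]
  exact hDsec.2 _ _ _

theorem gradient_apply_eq_inner (hDsec : IsDiffSec K emb Dsec) (h : H) (x : Euc n) (j : Fin n) :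
    gradient (emb h) x j = ⟪Dsec x j, h⟫ := by
  rw [← hDsec.2, dirDeriv, ← toDual_gradient, InnerProductSpace.toDual_apply_apply, ee,
    EuclideanSpace.inner_single_right]
  simp

end DiffSec

section Hamiltonian

variable {d N : ℕ} {H : Type*} [NormedAddCommGroup H] [InnerProductSpace ℝ H]
  {K : Euc (d + d) → Euc (d + d) → ℝ} {emb : H →ₗ[ℝ] (Euc (d + d) → ℝ)}
  {Dsec : Euc (d + d) → Fin (d + d) → H}

theorem JgradE_apply_eq_inner (hDsec : IsDiffSec K emb Dsec) (h : H) (Z : Fin N → Euc (d + d))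
    (n : Fin N) (i : Fin (d + d)) :
    JgradE d (emb h) (Z n) i = ⟪∑ q, bigJ d N (n, i) q • Dsec (Z q.1) q.2, h⟫ := by
  rw [sum_inner, Fintype.sum_prod_type, Finset.sum_eq_single n (fun m _ hm => by
    simp [bigJ, Ne.symm hm]) (by simp)]
  simp only [bigJ, Matrix.of_apply, if_true, real_inner_smul_left, ← gradient_apply_eq_inner hDsec]
  rfl

theorem empiricalRisk_eq_risk (hDsec : IsDiffSec K emb Dsec) (hN : N ≠ 0)
    (Z X : Fin N → Euc (d + d)) (lam : ℝ) (h : H) :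
    (1 / (N : ℝ)) * ∑ n, ‖JgradE d (emb h) (Z n) - X n‖ ^ 2 + lam * ‖h‖ ^ 2
      = (1 / (N : ℝ)) * RegularizedLeastSquares.risk
          (fun p => ∑ q, bigJ d N p q • Dsec (Z q.1) q.2) (fun p => X p.1 p.2) (lam * N) h := by
  have hsum : ∑ n, ‖JgradE d (emb h) (Z n) - X n‖ ^ 2
      = ∑ p : Fin N × Fin (d + d), (⟪∑ q, bigJ d N p q • Dsec (Z q.1) q.2, h⟫ - X p.1 p.2) ^ 2 := by
    rw [Fintype.sum_prod_type]
    refine Finset.sum_congr rfl fun n _ => ?_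
    simp only [EuclideanSpace.real_norm_sq_eq, PiLp.sub_apply, JgradE_apply_eq_inner hDsec]
  rw [RegularizedLeastSquares.risk, hsum]
  field_simp

end Hamiltonian

open RegularizedLeastSquares in
theorem differential_representer_theorem_general
    {d N : ℕ} (hN : 0 < N) (K : Euc (d + d) → Euc (d + d) → ℝ)
    (hMercer : IsMercer K)
    {H : Type*} [NormedAddCommGroup H] [InnerProductSpace ℝ H]
    (emb : H →ₗ[ℝ] (Euc (d + d) → ℝ))
    (Dsec : Euc (d + d) → Fin (d + d) → H) (hDsec : IsDiffSec K emb Dsec)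
    (Z : Fin N → Euc (d + d)) (X : Fin N → Euc (d + d))
    (lam : ℝ) (hlam : 0 < lam) :
    IsUnit (gramD K Z + (lam * N) • (1 : Matrix (Fin N × Fin (d + d)) (Fin N × Fin (d + d)) ℝ)) ∧
    (∃ g : H, ∀ h : H,
      (1 / (N : ℝ)) * ∑ n, ‖JgradE d (emb g) (Z n) - X n‖ ^ 2 + lam * ‖g‖ ^ 2
        ≤ (1 / (N : ℝ)) * ∑ n, ‖JgradE d (emb h) (Z n) - X n‖ ^ 2 + lam * ‖h‖ ^ 2) ∧
    ∀ g : H,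
      (∀ h : H,
        (1 / (N : ℝ)) * ∑ n, ‖JgradE d (emb g) (Z n) - X n‖ ^ 2 + lam * ‖g‖ ^ 2
          ≤ (1 / (N : ℝ)) * ∑ n, ‖JgradE d (emb h) (Z n) - X n‖ ^ 2 + lam * ‖h‖ ^ 2) →
      g = ∑ p : Fin N × Fin (d + d),
        Matrix.mulVec
          (gramD K Z + (lam * N) • (1 : Matrix (Fin N × Fin (d + d)) (Fin N × Fin (d + d)) ℝ))⁻¹
          (Matrix.mulVec (bigJ d N).transpose (fun q : Fin N × Fin (d + d) => X q.1 q.2)) p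
        • Dsec (Z p.1) p.2 := by
  have hNpos : (0 : ℝ) < N := Nat.cast_pos.mpr hN
  have hμ : 0 < lam * N := mul_pos hlam hNpos
  rw [gramD_eq_gram hMercer.1 hDsec]
  have hnormal := normalEq_sum_smul (bigJ_transpose_mul_self d N) (fun p => Dsec (Z p.1) p.2)
    (fun p => X p.1 p.2) hμ
  have hminimizer : ∀ g : H, (∀ h : H,
      (1 / (N : ℝ)) * ∑ n, ‖JgradE d (emb g) (Z n) - X n‖ ^ 2 + lam * ‖g‖ ^ 2
        ≤ (1 / (N : ℝ)) * ∑ n, ‖JgradE d (emb h) (Z n) - X n‖ ^ 2 + lam * ‖h‖ ^ 2) ↔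
      g = ∑ p, (((Matrix.gram ℝ fun p => Dsec (Z p.1) p.2) + (lam * N) • 1)⁻¹ *ᵥ
        ((bigJ d N)ᵀ *ᵥ fun q => X q.1 q.2)) p • Dsec (Z p.1) p.2 := by
    intro g
    simp only [empiricalRisk_eq_risk hDsec hN.ne', mul_le_mul_iff_of_pos_left
      (one_div_pos.mpr hNpos)]
    exact isMinimizer_iff_eq_of_normalEq hμ hnormal g
  exact ⟨isUnit_gram_add_smul_one _ hμ, ⟨_, (hminimizer _).2 rfl⟩, fun g hg => (hminimizer g).1 hg⟩

/-- **Differential Representer Theorem** (Theorem 3.5): for every `λ > 0`, the regularized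
empirical risk `R̂_{λ,N}(h) = (1/N) Σ_n ‖J∇h(Z^{(n)}) − X^{(n)}‖² + λ‖h‖²` has a minimizer
over `H_K`, the matrix `∇_{1,2}K(Z_N,Z_N) + λN I` is invertible, and every minimizer equals
`ĥ_{λ,N} = Σ_{i=1}^N ⟨ĉ_i, ∇₁K(Z^{(i)}, ·)⟩` with the vectorized coefficients
`ĉ = (∇_{1,2}K(Z_N,Z_N) + λN I)⁻¹ 𝕁ᵀ X_{σ²,N}`. -/
theorem differential_representer_theorem
    {d N : ℕ} (hN : 0 < N) (K : Euc (d + d) → Euc (d + d) → ℝ)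
    (hMercer : IsMercer K)
    (hCb : KernelCb (d + d) 3 K)
    {H : Type*} [NormedAddCommGroup H] [InnerProductSpace ℝ H] [CompleteSpace H]
    (emb : H →ₗ[ℝ] (Euc (d + d) → ℝ)) (sec : Euc (d + d) → H)
    (hRKHS : IsRKHS K emb sec)
    (Dsec : Euc (d + d) → Fin (d + d) → H) (hDsec : IsDiffSec K emb Dsec)
    (Z : Fin N → Euc (d + d)) (X : Fin N → Euc (d + d))
    (lam : ℝ) (hlam : 0 < lam) :
    IsUnit (gramD K Z + (lam * N) • (1 : Matrix (Fin N × Fin (d + d)) (Fin N × Fin (d + d)) ℝ)) ∧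
    (∃ g : H, ∀ h : H,
      (1 / (N : ℝ)) * ∑ n, ‖JgradE d (emb g) (Z n) - X n‖ ^ 2 + lam * ‖g‖ ^ 2
        ≤ (1 / (N : ℝ)) * ∑ n, ‖JgradE d (emb h) (Z n) - X n‖ ^ 2 + lam * ‖h‖ ^ 2) ∧
    ∀ g : H,
      (∀ h : H,
        (1 / (N : ℝ)) * ∑ n, ‖JgradE d (emb g) (Z n) - X n‖ ^ 2 + lam * ‖g‖ ^ 2
          ≤ (1 / (N : ℝ)) * ∑ n, ‖JgradE d (emb h) (Z n) - X n‖ ^ 2 + lam * ‖h‖ ^ 2) →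
      g = ∑ p : Fin N × Fin (d + d),
        Matrix.mulVec
          (gramD K Z + (lam * N) • (1 : Matrix (Fin N × Fin (d + d)) (Fin N × Fin (d + d)) ℝ))⁻¹
          (Matrix.mulVec (bigJ d N).transpose (fun q : Fin N × Fin (d + d) => X q.1 q.2)) p
        • Dsec (Z p.1) p.2 :=
  differential_representer_theorem_general hN K hMercer emb Dsec hDsec Z X lam hlam
end
end

section
/- PAC bound of the sampling error for fixed regularization: let K ∈ C_b^3(ℝ^{2d} × ℝ^{2d}) be a Mercer kernel with RKHS H_K, H ∈ H_K, Z^{(1)}, Z^{(2)}, … IID random variables on ℝ^{2d} with law μ_Z, and for each N let h̃_{λ,N} = (B_N + λI)^{-1} B_N H be the noise-free structure-preserving kernel estimator and h*_λ = (B + λI)^{-1} B H the best-in-class function. Then for every λ > 0 and every ε, δ > 0 there exists n ∈ ℕ such that for all N > n, P(‖h̃_{λ,N} − h*_λ‖_{H_K} > ε) < δ. -/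
noncomputable section
open MeasureTheory RealInnerProductSpace Filter

/-- The empirical operator `B_N = A_N^* A_N` : `B_N h = (1/N) ∇h(Z_N)ᵀ ∇₁K(Z_N, ·)`. -/
def BempOp {n : ℕ} {H : Type*} [NormedAddCommGroup H] [InnerProductSpace ℝ H]
    (emb : H →ₗ[ℝ] (Euc n → ℝ)) (Dsec : Euc n → Fin n → H) (N : ℕ) (z : ℕ → Euc n)
    (g : H) : H :=
  (1 / (N : ℝ)) • ∑ m ∈ Finset.range N, ∑ i, dirDeriv (ee n i) (emb g) (z m) • Dsec (z m) i

/-- The statistical operator `B = A^* A` : `B h = ∫ ∇h(x)ᵀ ∇₁K(x, ·) dμ(x)`. -/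
def BstatOp {n : ℕ} {H : Type*} [NormedAddCommGroup H] [InnerProductSpace ℝ H]
    (emb : H →ₗ[ℝ] (Euc n → ℝ)) (Dsec : Euc n → Fin n → H) (μ : Measure (Euc n))
    (g : H) : H :=
  ∫ x, (∑ i, dirDeriv (ee n i) (emb g) x • Dsec x i) ∂μ

/-! ### Auxiliary lemmas for the proof -/

open Topology

section AuxLemmas

lemma dirDeriv_prod_fst {E₁ E₂ : Type*} [NormedAddCommGroup E₁] [NormedSpace ℝ E₁]
    [NormedAddCommGroup E₂] [NormedSpace ℝ E₂] {f : E₁ × E₂ → ℝ}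
    (hf : Differentiable ℝ f) (y : E₂) (v : E₁) (x : E₁) :
    dirDeriv v (fun x' => f (x', y)) x = fderiv ℝ f (x, y) (v, 0) := by
  have h : HasFDerivAt (fun x' : E₁ => f (x', y))
      ((fderiv ℝ f (x, y)).comp ((ContinuousLinearMap.id ℝ E₁).prod 0)) x :=
    ((hf (x, y)).hasFDerivAt).comp x ((hasFDerivAt_id x).prodMk (hasFDerivAt_const y x))
  rw [dirDeriv, h.fderiv]
  rfl

lemma dirDeriv_prod_snd {E₁ E₂ : Type*} [NormedAddCommGroup E₁] [NormedSpace ℝ E₁]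
    [NormedAddCommGroup E₂] [NormedSpace ℝ E₂] {f : E₁ × E₂ → ℝ}
    (hf : Differentiable ℝ f) (x : E₁) (v : E₂) (y : E₂) :
    dirDeriv v (fun y' => f (x, y')) y = fderiv ℝ f (x, y) (0, v) := by
  have h : HasFDerivAt (fun y' : E₂ => f (x, y'))
      ((fderiv ℝ f (x, y)).comp ((0 : E₂ →L[ℝ] E₁).prod (ContinuousLinearMap.id ℝ E₂))) y :=
    ((hf (x, y)).hasFDerivAt).comp y ((hasFDerivAt_const x y).prodMk (hasFDerivAt_id y))
  rw [dirDeriv, h.fderiv]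
  rfl

/-- The first partial derivative `∂_{1,i} K` as a function on the product space. -/
def Tfun {n : ℕ} (K : Euc n → Euc n → ℝ) (i : Fin n) (p : Euc n × Euc n) : ℝ :=
  fderiv ℝ (fun q : Euc n × Euc n => K q.1 q.2) p (ee n i, 0)

/-- The mixed second partial derivative `∂_{2,i} ∂_{1,i} K` as a function on the product. -/
def Gfun {n : ℕ} (K : Euc n → Euc n → ℝ) (i : Fin n) (p : Euc n × Euc n) : ℝ :=
  fderiv ℝ (Tfun K i) p (0, ee n i)

lemma Gfun_eq_mderiv {n : ℕ} (K : Euc n → Euc n → ℝ) (i : Fin n) :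
    Gfun K i = mderiv [((0 : Euc n), ee n i), (ee n i, (0 : Euc n))]
      (fun q : Euc n × Euc n => K q.1 q.2) := rfl

lemma Tfun_contDiff {n : ℕ} {K : Euc n → Euc n → ℝ}
    (hF : ContDiff ℝ 3 (fun p : Euc n × Euc n => K p.1 p.2)) (i : Fin n) :
    ContDiff ℝ 2 (Tfun K i) :=
  (ContinuousLinearMap.apply ℝ ℝ ((ee n i, 0) : Euc n × Euc n)).contDiff.comp
    (hF.fderiv_right (by norm_num))

lemma Gfun_continuous {n : ℕ} {K : Euc n → Euc n → ℝ}
    (hF : ContDiff ℝ 3 (fun p : Euc n × Euc n => K p.1 p.2)) (i : Fin n) :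
    Continuous (Gfun K i) :=
  (ContinuousLinearMap.apply ℝ ℝ (((0 : Euc n), ee n i) : Euc n × Euc n)).continuous.comp
    ((Tfun_contDiff hF i).fderiv_right (m := 1) (by norm_num)).continuous

/-- The integrand `x ↦ ∇f(x)ᵀ ∇₁K(x,·)` appearing in `B` and `B_N`. -/
def XiOp {n : ℕ} {H : Type*} [NormedAddCommGroup H] [InnerProductSpace ℝ H]
    (Dsec : Euc n → Fin n → H) (f : H) (x : Euc n) : H :=
  ∑ i, ⟪Dsec x i, f⟫ • Dsec x i

end AuxLemmas

/-- Theorem 4.1 (PAC bound of the sampling error with fixed Tikhonov regularization): let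
`h̃_{λ,N} = (B_N + λI)⁻¹ B_N H` be the noise-free structure-preserving kernel estimator
(characterized by `(B_N + λ) h̃ = B_N H`) and `h*_λ = (B + λI)⁻¹ B H` the best-in-class
function (characterized by `(B + λ) h* = B H`).  Then for every `λ > 0` and all
`ε, δ > 0` there is `n ∈ ℕ` such that for all `N > n`,
`P(‖h̃_{λ,N} − h*_λ‖_{H_K} > ε) < δ`. -/
theorem sampling_error_PAC_bound
    {d : ℕ} (K : Euc (d + d) → Euc (d + d) → ℝ)
    (hMercer : IsMercer K)
    (hCb : KernelCb (d + d) 3 K)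
    {H : Type*} [NormedAddCommGroup H] [InnerProductSpace ℝ H] [CompleteSpace H]
    (emb : H →ₗ[ℝ] (Euc (d + d) → ℝ)) (sec : Euc (d + d) → H)
    (hRKHS : IsRKHS K emb sec)
    (Dsec : Euc (d + d) → Fin (d + d) → H) (hDsec : IsDiffSec K emb Dsec)
    {Ω : Type*} [MeasurableSpace Ω] (P : Measure Ω) [IsProbabilityMeasure P]
    (Z : ℕ → Ω → Euc (d + d)) (hZmeas : ∀ n, Measurable (Z n))
    (hZindep : ProbabilityTheory.iIndepFun Z P)
    (μZ : Measure (Euc (d + d))) [IsProbabilityMeasure μZ]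
    (hZlaw : ∀ n, P.map (Z n) = μZ)
    (Htrue : H) (lam : ℝ) (hlam : 0 < lam)
    (htil : ℕ → Ω → H)
    (hhtil : ∀ (N : ℕ) (ω : Ω),
      BempOp emb Dsec N (fun n => Z n ω) (htil N ω) + lam • htil N ω
        = BempOp emb Dsec N (fun n => Z n ω) Htrue)
    (hstar : H)
    (hhstar : BstatOp emb Dsec μZ hstar + lam • hstar = BstatOp emb Dsec μZ Htrue) :
    ∀ ε > 0, ∀ δ > 0, ∃ n : ℕ, ∀ N > n,
      P {ω | ε < ‖htil N ω - hstar‖} < ENNReal.ofReal δ := by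
  intro ε hε δ hδ
  letI : MeasurableSpace H := borel H
  haveI : BorelSpace H := ⟨rfl⟩
  have hF : ContDiff ℝ 3 (fun p : Euc (d + d) × Euc (d + d) => K p.1 p.2) := hCb.1
  have hFd : Differentiable ℝ (fun p : Euc (d + d) × Euc (d + d) => K p.1 p.2) :=
    hF.differentiable (by norm_num)
  have hTd : ∀ i, Differentiable ℝ (Tfun K i) := fun i =>
    (Tfun_contDiff hF i).differentiable (by norm_num)
  have hGc : ∀ i, Continuous (Gfun K i) := fun i => Gfun_continuous hF i
  -- the embedded differential sections are given by the partial derivative of `K`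
  have hembD : ∀ (y : Euc (d + d)) (i : Fin (d + d)),
      emb (Dsec y i) = fun z => Tfun K i (y, z) := by
    intro y i
    rw [hDsec.1 y i]
    funext z
    exact dirDeriv_prod_fst (f := fun p : Euc (d + d) × Euc (d + d) => K p.1 p.2)
      hFd z (ee (d + d) i) y
  -- the Gram function of the differential sections is the mixed second derivative
  have hinnerDD : ∀ (x y : Euc (d + d)) (i : Fin (d + d)),
      ⟪Dsec x i, Dsec y i⟫ = Gfun K i (y, x) := by
    intro x y i
    have h2 := hDsec.2 (Dsec y i) x i
    rw [hembD y i] at h2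
    rw [← h2]
    exact dirDeriv_prod_snd (f := Tfun K i) (hTd i) y (ee (d + d) i) x
  have hDnormsq : ∀ (i : Fin (d + d)) (x : Euc (d + d)), ‖Dsec x i‖ ^ 2 = Gfun K i (x, x) := by
    intro i x
    rw [← real_inner_self_eq_norm_sq, hinnerDD]
  -- boundedness of the mixed second derivative, from `K ∈ C_b^3`
  have hGbdd : ∀ i : Fin (d + d), ∃ C : ℝ, ∀ p, |Gfun K i p| ≤ C := by
    intro i
    obtain ⟨C, hC⟩ := hCb.2 [((0 : Euc (d + d)), ee (d + d) i), (ee (d + d) i, (0 : Euc (d + d)))]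
      (by
        intro v hv
        simp only [List.mem_cons, List.not_mem_nil, or_false] at hv
        rcases hv with rfl | rfl
        · exact Or.inr ⟨i, rfl⟩
        · exact Or.inl ⟨i, rfl⟩)
      (by simp)
    exact ⟨C, fun p => by rw [Gfun_eq_mderiv]; exact hC p⟩
  choose C hC using hGbdd
  have hDnorm : ∀ (i : Fin (d + d)) (x : Euc (d + d)), ‖Dsec x i‖ ^ 2 ≤ C i := by
    intro i x
    rw [hDnormsq i x]
    exact (le_abs_self _).trans (hC i (x, x))
  -- continuity of the differential sections
  have hDcont : ∀ i : Fin (d + d), Continuous fun x => Dsec x i := by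
    intro i
    rw [continuous_iff_continuousAt]
    intro x₀
    rw [ContinuousAt, tendsto_iff_dist_tendsto_zero]
    have hd : ∀ x, dist (Dsec x i) (Dsec x₀ i)
        = Real.sqrt (Gfun K i (x, x) - 2 * Gfun K i (x₀, x) + Gfun K i (x₀, x₀)) := by
      intro x
      rw [dist_eq_norm, ← Real.sqrt_sq (norm_nonneg (Dsec x i - Dsec x₀ i))]
      congr 1
      rw [norm_sub_sq_real, hDnormsq i x, hDnormsq i x₀, hinnerDD x x₀ i]
    simp only [hd]
    have hcont : Tendsto (fun x => Gfun K i (x, x) - 2 * Gfun K i (x₀, x) + Gfun K i (x₀, x₀))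
        (𝓝 x₀) (𝓝 (Gfun K i (x₀, x₀) - 2 * Gfun K i (x₀, x₀) + Gfun K i (x₀, x₀))) := by
      have h1 : Continuous fun x : Euc (d + d) => Gfun K i (x, x) :=
        (hGc i).comp (continuous_id.prodMk continuous_id)
      have h2 : Continuous fun x : Euc (d + d) => Gfun K i (x₀, x) :=
        (hGc i).comp (continuous_const.prodMk continuous_id)
      exact (((h1.sub (continuous_const.mul h2)).add continuous_const).tendsto x₀).congr (fun x => by simp only [Pi.add_apply, Pi.sub_apply, Pi.mul_apply])
    have h0 : Gfun K i (x₀, x₀) - 2 * Gfun K i (x₀, x₀) + Gfun K i (x₀, x₀) = 0 := by ring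
    rw [h0] at hcont
    simpa using hcont.sqrt
  -- the operators in terms of `XiOp`
  have hXiBemp : ∀ (N : ℕ) (z : ℕ → Euc (d + d)) (f : H),
      BempOp emb Dsec N z f = (N : ℝ)⁻¹ • ∑ m ∈ Finset.range N, XiOp Dsec f (z m) := by
    intro N z f
    unfold BempOp XiOp
    simp only [hDsec.2, one_div]
  have hXiBstat : ∀ f : H, BstatOp emb Dsec μZ f = ∫ x, XiOp Dsec f x ∂μZ := by
    intro f
    unfold BstatOp XiOp
    simp only [hDsec.2]
  have hXicont : ∀ f : H, Continuous (XiOp Dsec f) := fun f =>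
    continuous_finset_sum _ fun i _ => ((hDcont i).inner continuous_const).smul (hDcont i)
  have hXibdd : ∀ (f : H) (x : Euc (d + d)), ‖XiOp Dsec f x‖ ≤ (∑ i, C i) * ‖f‖ := by
    intro f x
    calc ‖XiOp Dsec f x‖ ≤ ∑ i, ‖⟪Dsec x i, f⟫ • Dsec x i‖ := norm_sum_le _ _
    _ ≤ ∑ i, C i * ‖f‖ := by
        refine Finset.sum_le_sum fun i _ => ?_
        rw [norm_smul, Real.norm_eq_abs]
        calc |⟪Dsec x i, f⟫| * ‖Dsec x i‖
            ≤ (‖Dsec x i‖ * ‖f‖) * ‖Dsec x i‖ :=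
              mul_le_mul_of_nonneg_right (abs_real_inner_le_norm _ _) (norm_nonneg _)
        _ = ‖Dsec x i‖ ^ 2 * ‖f‖ := by ring
        _ ≤ C i * ‖f‖ := mul_le_mul_of_nonneg_right (hDnorm i x) (norm_nonneg _)
    _ = (∑ i, C i) * ‖f‖ := (Finset.sum_mul _ _ _).symm
  have hXiint : ∀ f : H, Integrable (XiOp Dsec f) μZ := fun f =>
    ⟨(hXicont f).stronglyMeasurable.aestronglyMeasurable,
      HasFiniteIntegral.of_bounded (C := (∑ i, C i) * ‖f‖)
        (Eventually.of_forall (hXibdd f))⟩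
  have hXisub : ∀ (f₁ f₂ : H) (x : Euc (d + d)),
      XiOp Dsec (f₁ - f₂) x = XiOp Dsec f₁ x - XiOp Dsec f₂ x := by
    intro f₁ f₂ x
    unfold XiOp
    simp [inner_sub_right, sub_smul, Finset.sum_sub_distrib]
  -- the deterministic key bound
  have hkey : ∀ (N : ℕ) (ω : Ω), lam * ‖htil N ω - hstar‖
      ≤ ‖((N : ℝ)⁻¹ • ∑ m ∈ Finset.range N, XiOp Dsec (Htrue - hstar) (Z m ω))
          - ∫ x, XiOp Dsec (Htrue - hstar) x ∂μZ‖ := by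
    intro N ω
    set z : ℕ → Euc (d + d) := fun m => Z m ω with hz
    set u : H := htil N ω - hstar with hu
    have e1 : ((N : ℝ)⁻¹ • ∑ m ∈ Finset.range N, XiOp Dsec (htil N ω) (z m)) + lam • htil N ω
        = (N : ℝ)⁻¹ • ∑ m ∈ Finset.range N, XiOp Dsec Htrue (z m) := by
      have h := hhtil N ω
      rwa [hXiBemp, hXiBemp] at h
    have e2 : (∫ x, XiOp Dsec hstar x ∂μZ) + lam • hstar = ∫ x, XiOp Dsec Htrue x ∂μZ := by
      have h := hhstar
      rwa [hXiBstat, hXiBstat] at h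
    have hSsub : ∀ f₁ f₂ : H,
        ((N : ℝ)⁻¹ • ∑ m ∈ Finset.range N, XiOp Dsec (f₁ - f₂) (z m))
          = ((N : ℝ)⁻¹ • ∑ m ∈ Finset.range N, XiOp Dsec f₁ (z m))
            - (N : ℝ)⁻¹ • ∑ m ∈ Finset.range N, XiOp Dsec f₂ (z m) := by
      intro f₁ f₂
      rw [← smul_sub, ← Finset.sum_sub_distrib]
      simp only [hXisub]
    have hIsub : (∫ x, XiOp Dsec (Htrue - hstar) x ∂μZ)
        = (∫ x, XiOp Dsec Htrue x ∂μZ) - ∫ x, XiOp Dsec hstar x ∂μZ := by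
      rw [← integral_sub (hXiint _) (hXiint _)]
      simp only [hXisub]
    have keyEq : ((N : ℝ)⁻¹ • ∑ m ∈ Finset.range N, XiOp Dsec u (z m)) + lam • u
        = ((N : ℝ)⁻¹ • ∑ m ∈ Finset.range N, XiOp Dsec (Htrue - hstar) (z m))
          - ∫ x, XiOp Dsec (Htrue - hstar) x ∂μZ := by
      rw [hu, hSsub, hSsub, hIsub, ← e1, ← e2]
      module
    have hpos : 0 ≤ ⟪(N : ℝ)⁻¹ • ∑ m ∈ Finset.range N, XiOp Dsec u (z m), u⟫ := by
      rw [real_inner_smul_left, sum_inner]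
      refine mul_nonneg (by positivity) (Finset.sum_nonneg fun m _ => ?_)
      unfold XiOp
      rw [sum_inner]
      refine Finset.sum_nonneg fun i _ => ?_
      rw [real_inner_smul_left]
      exact mul_self_nonneg _
    have h1 : lam * ‖u‖ ^ 2
        ≤ ‖((N : ℝ)⁻¹ • ∑ m ∈ Finset.range N, XiOp Dsec (Htrue - hstar) (z m))
            - ∫ x, XiOp Dsec (Htrue - hstar) x ∂μZ‖ * ‖u‖ := by
      calc lam * ‖u‖ ^ 2 = ⟪lam • u, u⟫ := by
            rw [real_inner_smul_left, real_inner_self_eq_norm_sq]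
      _ ≤ ⟪((N : ℝ)⁻¹ • ∑ m ∈ Finset.range N, XiOp Dsec u (z m)) + lam • u, u⟫ := by
            rw [inner_add_left]
            linarith [hpos]
      _ = ⟪((N : ℝ)⁻¹ • ∑ m ∈ Finset.range N, XiOp Dsec (Htrue - hstar) (z m))
            - ∫ x, XiOp Dsec (Htrue - hstar) x ∂μZ, u⟫ := by rw [keyEq]
      _ ≤ ‖((N : ℝ)⁻¹ • ∑ m ∈ Finset.range N, XiOp Dsec (Htrue - hstar) (z m))
            - ∫ x, XiOp Dsec (Htrue - hstar) x ∂μZ‖ * ‖u‖ := real_inner_le_norm _ _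
    rcases eq_or_lt_of_le (norm_nonneg u) with h | h
    · rw [← h]
      simp only [mul_zero]
      exact norm_nonneg _
    · nlinarith [h1, h]
  -- the probabilistic part : strong law of large numbers
  set ξ : Euc (d + d) → H := XiOp Dsec (Htrue - hstar) with hξ
  set X : ℕ → Ω → H := fun m ω => ξ (Z m ω) with hX
  set b : H := ∫ x, ξ x ∂μZ with hb
  have hξsm : StronglyMeasurable ξ := (hXicont _).stronglyMeasurable
  have hξmeas : Measurable ξ := (hXicont _).measurable
  have hXsm : ∀ m, StronglyMeasurable (X m) := fun m => hξsm.comp_measurable (hZmeas m)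
  have hXint : Integrable (X 0) P :=
    ⟨(hXsm 0).aestronglyMeasurable,
      HasFiniteIntegral.of_bounded (C := (∑ i, C i) * ‖Htrue - hstar‖)
        (Eventually.of_forall fun ω => hXibdd _ _)⟩
  have hindep : Pairwise (Function.onFun (ProbabilityTheory.IndepFun · · P) X) := fun i j hij =>
    (hZindep.indepFun hij).comp hξmeas hξmeas
  have hident : ∀ m, ProbabilityTheory.IdentDistrib (X m) (X 0) P P := by
    intro m
    refine ⟨(hXsm m).aestronglyMeasurable.aemeasurable,
      (hXsm 0).aestronglyMeasurable.aemeasurable, ?_⟩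
    show P.map (X m) = P.map (X 0)
    have h1 : X m = ξ ∘ Z m := rfl
    have h2 : X 0 = ξ ∘ Z 0 := rfl
    rw [h1, h2, ← Measure.map_map hξmeas (hZmeas m), ← Measure.map_map hξmeas (hZmeas 0),
      hZlaw m, hZlaw 0]
  have hLLN := ProbabilityTheory.strong_law_ae X hXint hindep hident
  have hmean : (∫ ω, X 0 ω ∂P) = b := by
    rw [hb, ← hZlaw 0,
      integral_map (hZmeas 0).aemeasurable hξsm.aestronglyMeasurable]
  rw [hmean] at hLLN
  -- convergence in measure
  set SN : ℕ → Ω → H := fun N ω => (N : ℝ)⁻¹ • ∑ m ∈ Finset.range N, X m ω with hSN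
  have hSNsm : ∀ N, AEStronglyMeasurable (SN N) P := fun N =>
    ((Finset.stronglyMeasurable_fun_sum (Finset.range N)
      (fun m _ => hXsm m)).const_smul _).aestronglyMeasurable
  have hTIM : TendstoInMeasure P SN atTop (fun _ => b) :=
    tendstoInMeasure_of_tendsto_ae hSNsm hLLN
  have hconv := tendstoInMeasure_iff_dist.1 hTIM (lam * ε) (by positivity)
  have hev : ∀ᶠ N in atTop, P {ω | lam * ε ≤ dist (SN N ω) b} < ENNReal.ofReal δ :=
    hconv.eventually_lt_const (ENNReal.ofReal_pos.2 hδ)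
  obtain ⟨n, hn⟩ := eventually_atTop.1 hev
  refine ⟨n, fun N hN => ?_⟩
  have hsub : {ω | ε < ‖htil N ω - hstar‖} ⊆ {ω | lam * ε ≤ dist (SN N ω) b} := by
    intro ω hω
    have h1 := hkey N ω
    have h2 : lam * ε < lam * ‖htil N ω - hstar‖ := mul_lt_mul_of_pos_left hω hlam
    have h3 : lam * ε ≤ ‖((N : ℝ)⁻¹ • ∑ m ∈ Finset.range N, ξ (Z m ω)) - b‖ :=
      le_of_lt (lt_of_lt_of_le h2 h1)
    simpa [SN, X, dist_eq_norm] using h3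
  exact lt_of_le_of_lt (measure_mono hsub) (hn N (le_of_lt hN))
end
end
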